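/- arXiv:0801.1809 — 15 statements merged into one kernel-verified Lean document; each statement's English description precedes it below -/
import Mathlib

section
/- Let p be an odd prime. Suppose there exists a prime θ satisfying Condition N-C for p and Condition p-N-p for p. Then for all pairwise coprime nonzero integers x, y, z with x^p + y^p = z^p, p^2 divides one of x, y, z. (Sophie Germain's Theorem.) -/
/-!
Case I, `p ∤ xyz`: Condition N-C applied to `x ^ p + y ^ p ≡ (-z) ^ p (mod θ)` makes `θ` divide
one of `x, y, z`, say `z`. The coprime factorizations `x + y = a ^ p`,
`(x ^ p + y ^ p) / (x + y) = α ^ p`, `y + z = b ^ p`, `z + x = c ^ p` give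
`b ^ p + c ^ p ≡ a ^ p (mod θ)`, so `θ ∣ a` by N-C again. Then `x ≡ -y`, hence
`α ^ p ≡ p * x ^ (p - 1) ≡ p * (c ^ (p - 1)) ^ p (mod θ)`, contradicting p-N-p.

Case II, `p ∣ x`: now `p ∤ yz`, so `z + x = b ^ p` and `x + y = c ^ p`. Lifting the exponent turns
`p ^ 3 ∣ y ^ p + z ^ p` into `p ^ 2 ∣ y + z`, and `p ∣ b ^ p + c ^ p = 2 * x + (y + z)` into
`p ^ 2 ∣ b ^ p + c ^ p`; hence `p ^ 2 ∣ 2 * x`.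
-/

theorem add_mul_geom_sum₂_neg {R : Type*} [CommRing R] (x y : R) {n : ℕ} (hn : Odd n) :
    (x + y) * ∑ i ∈ Finset.range n, x ^ i * (-y) ^ (n - 1 - i) = x ^ n + y ^ n := by
  rw [mul_comm, ← sub_neg_eq_add x y, geom_sum₂_mul, hn.neg_pow, sub_neg_eq_add]

theorem Int.isCoprime_add_geom_sum₂_neg {p : ℕ} (hp : p.Prime) (hodd : Odd p) {x y w : ℤ}
    (hxy : IsCoprime x y) (hw : ¬ (p : ℤ) ∣ w) (h : x ^ p + y ^ p = w ^ p) :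
    IsCoprime (x + y) (∑ i ∈ Finset.range p, x ^ i * (-y) ^ (p - 1 - i)) := by
  have hmul := (add_mul_geom_sum₂_neg x y hodd).trans h
  have hw0 : w ≠ 0 := by rintro rfl; exact hw (dvd_zero _)
  refine isCoprime_of_prime_dvd (fun ⟨h0, _⟩ ↦ ?_) fun q hq hqs hqG ↦ ?_
  · rw [h0, zero_mul] at hmul
    exact pow_ne_zero p hw0 hmul.symm
  have hqw : q ∣ w := hq.dvd_of_dvd_pow (hmul ▸ hqs.mul_right _)
  have hqs' : q ∣ x - -y := by rwa [sub_neg_eq_add]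
  rcases hq.dvd_or_dvd ((dvd_geom_sum₂_iff_of_dvd_sub hqs').mp hqG) with hqp | hqy
  · have hpq : Associated q p :=
      hq.irreducible.associated_of_dvd (Nat.prime_iff_prime_int.mp hp).irreducible hqp
    exact hw (hpq.dvd_iff_dvd_left.mp hqw)
  · have hqy : q ∣ y := dvd_neg.mp (hq.dvd_of_dvd_pow hqy)
    exact hq.not_isUnit (hxy.isUnit_of_dvd' ((dvd_add_left hqy).mp hqs) hqy)

theorem Int.exists_pow_eq_add_of_pow_add_pow_eq_pow {p : ℕ} (hp : p.Prime) (hodd : Odd p)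
    {x y w : ℤ} (hxy : IsCoprime x y) (hw : ¬ (p : ℤ) ∣ w) (h : x ^ p + y ^ p = w ^ p) :
    (∃ a, x + y = a ^ p) ∧ ∃ α, ∑ i ∈ Finset.range p, x ^ i * (-y) ^ (p - 1 - i) = α ^ p :=
  Int.eq_pow_of_mul_eq_pow_odd (Int.isCoprime_add_geom_sum₂_neg hp hodd hxy hw h) hodd
    ((add_mul_geom_sum₂_neg x y hodd).trans h)

theorem Int.dvd_add_of_dvd_pow_add_pow {p : ℕ} [Fact p.Prime] {x y : ℤ}
    (h : (p : ℤ) ∣ x ^ p + y ^ p) : (p : ℤ) ∣ x + y := by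
  rw [← ZMod.intCast_zmod_eq_zero_iff_dvd] at h ⊢
  push_cast at h ⊢
  rwa [ZMod.pow_card, ZMod.pow_card] at h

theorem Int.pow_succ_dvd_pow_add_pow_iff {p : ℕ} (hp : p.Prime) (hodd : Odd p) {x y : ℤ}
    (hxy : (p : ℤ) ∣ x + y) (hx : ¬ (p : ℤ) ∣ x) (k : ℕ) :
    (p : ℤ) ^ (k + 1) ∣ x ^ p + y ^ p ↔ (p : ℤ) ^ k ∣ x + y := by
  rw [pow_dvd_iff_le_emultiplicity, pow_dvd_iff_le_emultiplicity,
    Int.emultiplicity_pow_add_pow hp hodd hxy hx hodd, Nat.Prime.emultiplicity_self hp,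
    Nat.cast_add, Nat.cast_one]
  exact WithTop.add_le_add_iff_right WithTop.one_ne_top

/-- Condition N-C. -/
def NoConsecutivePowResidues (p θ : ℕ) : Prop :=
  ¬ ∃ a b : ℤ, ¬ (θ : ℤ) ∣ a ∧ ¬ (θ : ℤ) ∣ b ∧ b ^ p ≡ a ^ p + 1 [ZMOD (θ : ℤ)]

/-- Condition p-N-p. -/
def NotPowResidueSelf (p θ : ℕ) : Prop :=
  ¬ ∃ c : ℤ, c ^ p ≡ (p : ℤ) [ZMOD (θ : ℤ)]

theorem NoConsecutivePowResidues.eq_zero_of_pow_add_pow_eq_pow {p θ : ℕ} [Fact θ.Prime]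
    (h : NoConsecutivePowResidues p θ) {u v w : ZMod θ} (huvw : u ^ p + v ^ p = w ^ p) :
    u = 0 ∨ v = 0 ∨ w = 0 := by
  by_contra! hne
  obtain ⟨hu, hv, hw⟩ := hne
  obtain ⟨a, ha⟩ := ZMod.intCast_surjective (u / v)
  obtain ⟨b, hb⟩ := ZMod.intCast_surjective (w / v)
  refine h ⟨a, b, ?_, ?_, ?_⟩
  · rw [← ZMod.intCast_zmod_eq_zero_iff_dvd, ha]
    exact div_ne_zero hu hv
  · rw [← ZMod.intCast_zmod_eq_zero_iff_dvd, hb]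
    exact div_ne_zero hw hv
  · rw [← ZMod.intCast_eq_intCast_iff]
    push_cast
    rw [ha, hb, div_pow, div_pow, ← huvw]
    field_simp

theorem NotPowResidueSelf.pow_ne {p θ : ℕ} (h : NotPowResidueSelf p θ) (w : ZMod θ) :
    w ^ p ≠ p := by
  obtain ⟨c, rfl⟩ := ZMod.intCast_surjective w
  intro hc
  exact h ⟨c, (ZMod.intCast_eq_intCast_iff _ _ _).mp (by push_cast; exact hc)⟩

structure IsPrimitiveFermatTriple (n : ℕ) (x y z : ℤ) : Prop where
  eq_zero : x ^ n + y ^ n + z ^ n = 0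
  coprime_xy : IsCoprime x y
  coprime_yz : IsCoprime y z
  coprime_zx : IsCoprime z x

namespace IsPrimitiveFermatTriple

variable {p : ℕ} {x y z : ℤ}

theorem rotate (h : IsPrimitiveFermatTriple p x y z) : IsPrimitiveFermatTriple p y z x :=
  ⟨by linear_combination h.eq_zero, h.coprime_yz, h.coprime_zx, h.coprime_xy⟩

theorem not_dvd_of_dvd {q : ℕ} (hq : q.Prime) (h : IsPrimitiveFermatTriple p x y z)
    (hqx : (q : ℤ) ∣ x) : ¬ (q : ℤ) ∣ y ∧ ¬ (q : ℤ) ∣ z := by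
  have hq' := (Nat.prime_iff_prime_int.mp hq).not_isUnit
  exact ⟨fun hqy ↦ hq' (h.coprime_xy.isUnit_of_dvd' hqx hqy),
    fun hqz ↦ hq' (h.coprime_zx.isUnit_of_dvd' hqz hqx)⟩

theorem pow_add_pow_eq_neg_pow (hodd : Odd p) (h : IsPrimitiveFermatTriple p x y z) :
    x ^ p + y ^ p = (-z) ^ p := by
  rw [hodd.neg_pow]
  linear_combination h.eq_zero

theorem exists_pow_eq_add (hp : p.Prime) (hodd : Odd p) (h : IsPrimitiveFermatTriple p x y z)
    (hz : ¬ (p : ℤ) ∣ z) :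
    (∃ a, x + y = a ^ p) ∧ ∃ α, ∑ i ∈ Finset.range p, x ^ i * (-y) ^ (p - 1 - i) = α ^ p :=
  Int.exists_pow_eq_add_of_pow_add_pow_eq_pow hp hodd h.coprime_xy (by rwa [dvd_neg])
    (h.pow_add_pow_eq_neg_pow hodd)

theorem sq_dvd_of_dvd (hp : p.Prime) (hodd : Odd p) (h : IsPrimitiveFermatTriple p x y z)
    (hpx : (p : ℤ) ∣ x) : (p : ℤ) ^ 2 ∣ x := by
  have := Fact.mk hp
  have hp3 : 3 ≤ p := by obtain ⟨k, rfl⟩ := hodd; have := hp.two_le; omega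
  obtain ⟨hpy, hpz⟩ := h.not_dvd_of_dvd hp hpx
  obtain ⟨⟨c, hc⟩, -⟩ := h.exists_pow_eq_add hp hodd hpz
  obtain ⟨⟨b, hb⟩, -⟩ := h.rotate.rotate.exists_pow_eq_add hp hodd hpy
  have hyz := h.rotate.pow_add_pow_eq_neg_pow hodd
  have hp3yz : (p : ℤ) ^ 3 ∣ y ^ p + z ^ p :=
    hyz ▸ (pow_dvd_pow _ hp3).trans (pow_dvd_pow_of_dvd (dvd_neg.mpr hpx) p)
  have hpyz : (p : ℤ) ∣ y + z :=
    Int.dvd_add_of_dvd_pow_add_pow ((dvd_pow_self _ (by norm_num)).trans hp3yz)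
  have hp2yz : (p : ℤ) ^ 2 ∣ y + z :=
    (Int.pow_succ_dvd_pow_add_pow_iff hp hodd hpyz hpy 2).mp hp3yz
  have hbc : b ^ p + c ^ p = 2 * x + (y + z) := by linear_combination -hb - hc
  have hpbc : (p : ℤ) ∣ b + c :=
    Int.dvd_add_of_dvd_pow_add_pow (hbc ▸ dvd_add (hpx.mul_left 2) hpyz)
  have hpb : ¬ (p : ℤ) ∣ b := fun hpb ↦
    hpz ((dvd_add_left hpx).mp (hb ▸ dvd_pow hpb hp.ne_zero))
  have hp2bc : (p : ℤ) ^ 2 ∣ b ^ p + c ^ p :=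
    (Int.pow_succ_dvd_pow_add_pow_iff hp hodd hpbc hpb 1).mpr (by rwa [pow_one])
  have hp2x : (p : ℤ) ^ 2 ∣ 2 * x := by
    rw [show 2 * x = b ^ p + c ^ p - (y + z) by linear_combination -hbc]
    exact dvd_sub hp2bc hp2yz
  have hcop : IsCoprime ((p : ℤ) ^ 2) 2 :=
    Int.isCoprime_two_right.mpr (by exact_mod_cast hodd.pow)
  exact hcop.dvd_of_dvd_mul_left hp2x

variable {θ : ℕ} [Fact θ.Prime]

theorem not_dvd_of_not_dvd (hp : p.Prime) (hodd : Odd p) (hNC : NoConsecutivePowResidues p θ)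
    (hpNp : NotPowResidueSelf p θ) (h : IsPrimitiveFermatTriple p x y z)
    (hpx : ¬ (p : ℤ) ∣ x) (hpy : ¬ (p : ℤ) ∣ y) (hpz : ¬ (p : ℤ) ∣ z) : ¬ (θ : ℤ) ∣ z := by
  intro hθz
  obtain ⟨hθx, hθy⟩ := h.rotate.rotate.not_dvd_of_dvd Fact.out hθz
  obtain ⟨⟨a, ha⟩, α, hα⟩ := h.exists_pow_eq_add hp hodd hpz
  obtain ⟨⟨b, hb⟩, -⟩ := h.rotate.exists_pow_eq_add hp hodd hpx
  obtain ⟨⟨c, hc⟩, -⟩ := h.rotate.rotate.exists_pow_eq_add hp hodd hpy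
  rw [← ZMod.intCast_zmod_eq_zero_iff_dvd] at hθx hθy hθz
  have ha' : (a : ZMod θ) ^ p = x + y := by rw [← Int.cast_pow, ← ha]; push_cast; rfl
  have hb' : (b : ZMod θ) ^ p = y := by rw [← Int.cast_pow, ← hb]; push_cast; rw [hθz, add_zero]
  have hc' : (c : ZMod θ) ^ p = x := by rw [← Int.cast_pow, ← hc]; push_cast; rw [hθz, zero_add]
  have hc0 : (c : ZMod θ) ≠ 0 := by
    rintro hc0
    rw [hc0, zero_pow hp.ne_zero] at hc'
    exact hθx hc'.symm
  have ha0 : (a : ZMod θ) = 0 := by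
    rcases hNC.eq_zero_of_pow_add_pow_eq_pow (u := b) (v := c) (w := a)
      (by rw [ha', hb', hc', add_comm]) with hb0 | hc0' | ha0
    · rw [hb0, zero_pow hp.ne_zero] at hb'; exact absurd hb'.symm hθy
    · exact absurd hc0' hc0
    · exact ha0
  have hxy : -(y : ZMod θ) = x :=
    (eq_neg_of_add_eq_zero_left (by rw [← ha', ha0, zero_pow hp.ne_zero])).symm
  have hα' : (α : ZMod θ) ^ p = p * ((c : ZMod θ) ^ (p - 1)) ^ p := by
    rw [← Int.cast_pow, ← hα]
    push_cast
    rw [hxy, geom_sum₂_self, ← hc', ← pow_mul, ← pow_mul, Nat.mul_comm]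
  refine hpNp.pow_ne (α / c ^ (p - 1)) ?_
  rw [div_pow, hα', mul_div_assoc, div_self (pow_ne_zero _ (pow_ne_zero _ hc0)), mul_one]

theorem dvd_mul_mul (hp : p.Prime) (hodd : Odd p) (hNC : NoConsecutivePowResidues p θ)
    (hpNp : NotPowResidueSelf p θ) (h : IsPrimitiveFermatTriple p x y z) :
    (p : ℤ) ∣ x * y * z := by
  by_contra hpxyz
  simp only [(Nat.prime_iff_prime_int.mp hp).dvd_mul, not_or] at hpxyz
  obtain ⟨⟨hpx, hpy⟩, hpz⟩ := hpxyz
  have hmod : (x : ZMod θ) ^ p + (y : ZMod θ) ^ p = ((-z : ℤ) : ZMod θ) ^ p := by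
    exact_mod_cast congrArg (Int.cast : ℤ → ZMod θ) (h.pow_add_pow_eq_neg_pow hodd)
  rcases hNC.eq_zero_of_pow_add_pow_eq_pow hmod with hθ | hθ | hθ <;>
    rw [ZMod.intCast_zmod_eq_zero_iff_dvd] at hθ
  · exact h.rotate.not_dvd_of_not_dvd hp hodd hNC hpNp hpy hpz hpx hθ
  · exact h.rotate.rotate.not_dvd_of_not_dvd hp hodd hNC hpNp hpz hpx hpy hθ
  · exact h.not_dvd_of_not_dvd hp hodd hNC hpNp hpx hpy hpz (dvd_neg.mp hθ)

end IsPrimitiveFermatTriple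

theorem sophie_germain_theorem_general
    (p θ : ℕ) (hp : p.Prime) (hpodd : Odd p) (hθ : θ.Prime)
    (hNC : ¬ ∃ a b : ℤ, ¬ (θ : ℤ) ∣ a ∧ ¬ (θ : ℤ) ∣ b ∧ b ^ p ≡ a ^ p + 1 [ZMOD (θ : ℤ)])
    (hpNp : ¬ ∃ c : ℤ, c ^ p ≡ (p : ℤ) [ZMOD (θ : ℤ)])
    (x y z : ℤ)
    (hxy : IsCoprime x y) (hyz : IsCoprime y z) (hxz : IsCoprime x z)
    (hfermat : x ^ p + y ^ p = z ^ p) :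
    (p : ℤ) ^ 2 ∣ x ∨ (p : ℤ) ^ 2 ∣ y ∨ (p : ℤ) ^ 2 ∣ z := by
  have := Fact.mk hθ
  have h : IsPrimitiveFermatTriple p x y (-z) :=
    ⟨by rw [hpodd.neg_pow]; linear_combination hfermat, hxy, hyz.neg_right, hxz.symm.neg_left⟩
  have hpxyz := h.dvd_mul_mul hp hpodd hNC hpNp
  simp only [(Nat.prime_iff_prime_int.mp hp).dvd_mul, dvd_neg] at hpxyz
  rcases hpxyz with (hpx | hpy) | hpz
  · exact .inl (h.sq_dvd_of_dvd hp hpodd hpx)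
  · exact .inr (.inl (h.rotate.sq_dvd_of_dvd hp hpodd hpy))
  · exact .inr (.inr (dvd_neg.mp (h.rotate.rotate.sq_dvd_of_dvd hp hpodd (dvd_neg.mpr hpz))))

/-- Sophie Germain's Theorem: if there is an auxiliary prime θ satisfying
Condition N-C (no two nonzero consecutive p-th power residues mod θ) and
Condition p-N-p (p is not a p-th power residue mod θ), then in any solution
of the Fermat equation with pairwise coprime nonzero integers, p² divides
one of x, y, z. -/
theorem sophie_germain_theorem
    (p θ : ℕ) (hp : p.Prime) (hpodd : Odd p) (hθ : θ.Prime)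
    (hNC : ¬ ∃ a b : ℤ, ¬ (θ : ℤ) ∣ a ∧ ¬ (θ : ℤ) ∣ b ∧ b ^ p ≡ a ^ p + 1 [ZMOD (θ : ℤ)])
    (hpNp : ¬ ∃ c : ℤ, c ^ p ≡ (p : ℤ) [ZMOD (θ : ℤ)])
    (x y z : ℤ) (hx : x ≠ 0) (hy : y ≠ 0) (hz : z ≠ 0)
    (hxy : IsCoprime x y) (hyz : IsCoprime y z) (hxz : IsCoprime x z)
    (hfermat : x ^ p + y ^ p = z ^ p) :
    (p : ℤ) ^ 2 ∣ x ∨ (p : ℤ) ^ 2 ∣ y ∨ (p : ℤ) ^ 2 ∣ z :=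
  sophie_germain_theorem_general p θ hp hpodd hθ hNC hpNp x y z hxy hyz hxz hfermat
end

section
/- Let p be an odd prime and θ a prime satisfying Condition N-C for p. Then for all integers x, y, z with x^p + y^p = z^p, θ divides the product x·y·z. -/
/-- If θ is a prime satisfying Condition N-C for an odd prime p, then in any
integer solution of the Fermat equation, θ divides the product x·y·z. -/
theorem aux_prime_divides_product
    (p θ : ℕ) (hp : p.Prime) (hpodd : Odd p) (hθ : θ.Prime)
    (hNC : ¬ ∃ a b : ℤ, ¬ (θ : ℤ) ∣ a ∧ ¬ (θ : ℤ) ∣ b ∧ b ^ p ≡ a ^ p + 1 [ZMOD (θ : ℤ)])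
    (x y z : ℤ) (hfermat : x ^ p + y ^ p = z ^ p) :
    (θ : ℤ) ∣ x * y * z := by
  by_contra h
  apply hNC
  have hx : ¬ (θ : ℤ) ∣ x := fun hd => h (dvd_mul_of_dvd_left (dvd_mul_of_dvd_left hd y) z)
  have hy : ¬ (θ : ℤ) ∣ y := fun hd => h (dvd_mul_of_dvd_left (dvd_mul_of_dvd_right hd x) z)
  have hz : ¬ (θ : ℤ) ∣ z := fun hd => h (Dvd.dvd.mul_left hd _)
  have hθZ : Prime (θ : ℤ) := Nat.prime_iff_prime_int.mp hθ
  have hcop : IsCoprime (θ : ℤ) x := (hθZ.coprime_iff_not_dvd).mpr hx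
  obtain ⟨u, v, huv⟩ := hcop
  have hc : ¬ (θ : ℤ) ∣ v := by
    intro hd
    apply hθZ.not_dvd_one
    have h1 : (θ : ℤ) ∣ u * θ + v * x :=
      dvd_add (⟨u, (mul_comm _ _)⟩) (dvd_mul_of_dvd_left hd x)
    rwa [huv] at h1
  have hvx : v * x ≡ 1 [ZMOD (θ : ℤ)] := by
    rw [Int.modEq_iff_dvd]
    exact ⟨u, by linarith⟩
  refine ⟨v * y, v * z, ?_, ?_, ?_⟩
  · intro hd
    rcases hθZ.dvd_mul.mp hd with h' | h'
    exacts [hc h', hy h']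
  · intro hd
    rcases hθZ.dvd_mul.mp hd with h' | h'
    exacts [hc h', hz h']
  · have key : (v * z) ^ p = (v * y) ^ p + (v * x) ^ p := by
      rw [mul_pow, mul_pow, mul_pow, ← hfermat]; ring
    rw [key]
    have hpow : (v * x) ^ p ≡ 1 [ZMOD (θ : ℤ)] := by
      simpa using hvx.pow p
    exact Int.ModEq.add_left _ hpow
end

section
/- Let p be an odd prime. If there exist infinitely many primes θ satisfying Condition N-C for p, then there are no nonzero integers x, y, z with x^p + y^p = z^p. (Germain's grand plan: infinitely many qualifying auxiliary primes imply Fermat's Last Theorem for exponent p.) -/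
theorem div_pow_eq_div_pow_add_one {F : Type*} [Field F] {n : ℕ} {x y z : F} (hx : x ≠ 0)
    (h : x ^ n + y ^ n = z ^ n) : (z / x) ^ n = (y / x) ^ n + 1 := by
  rw [div_pow, div_pow, ← h, add_div, div_self (pow_ne_zero n hx), add_comm]

theorem Set.Infinite.exists_not_dvd {S : Set ℕ} (hS : S.Infinite) {m : ℤ} (hm : m ≠ 0) :
    ∃ θ ∈ S, ¬ (θ : ℤ) ∣ m := by
  obtain ⟨θ, hθS, hθm⟩ := hS.exists_gt m.natAbs
  refine ⟨θ, hθS, fun hdvd => ?_⟩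
  have := Nat.le_of_dvd (Int.natAbs_pos.mpr hm) (Int.ofNat_dvd_left.mp hdvd)
  omega

namespace NoConsecutivePowResidues

variable {p θ : ℕ}

theorem pow_ne_pow_add_one (h : NoConsecutivePowResidues p θ) {a b : ZMod θ} (ha : a ≠ 0)
    (hb : b ≠ 0) : b ^ p ≠ a ^ p + 1 := by
  intro hab
  refine h ⟨a.cast, b.cast, ?_, ?_, ?_⟩
  · rwa [← ZMod.intCast_zmod_eq_zero_iff_dvd, ZMod.intCast_zmod_cast]
  · rwa [← ZMod.intCast_zmod_eq_zero_iff_dvd, ZMod.intCast_zmod_cast]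
  · rw [← ZMod.intCast_eq_intCast_iff]
    push_cast
    exact hab

theorem dvd_mul_mul_of_add_pow_eq [Fact θ.Prime] (h : NoConsecutivePowResidues p θ)
    {x y z : ℤ} (hxyz : x ^ p + y ^ p = z ^ p) : (θ : ℤ) ∣ x * y * z := by
  by_contra hdvd
  have hxyz_ne : (x : ZMod θ) * y * z ≠ 0 := by
    exact_mod_cast (ZMod.intCast_zmod_eq_zero_iff_dvd _ θ).not.mpr hdvd
  obtain ⟨⟨hx, hy⟩, hz⟩ : ((x : ZMod θ) ≠ 0 ∧ (y : ZMod θ) ≠ 0) ∧ (z : ZMod θ) ≠ 0 := by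
    simpa only [mul_ne_zero_iff] using hxyz_ne
  refine h.pow_ne_pow_add_one (div_ne_zero hy hx) (div_ne_zero hz hx) ?_
  exact div_pow_eq_div_pow_add_one hx (by exact_mod_cast congrArg (Int.cast : ℤ → ZMod θ) hxyz)

end NoConsecutivePowResidues

theorem grand_plan_general
    (p : ℕ)
    (hinf : {θ : ℕ | θ.Prime ∧
      ¬ ∃ a b : ℤ, ¬ (θ : ℤ) ∣ a ∧ ¬ (θ : ℤ) ∣ b ∧
        b ^ p ≡ a ^ p + 1 [ZMOD (θ : ℤ)]}.Infinite) :
    ¬ ∃ x y z : ℤ, x ≠ 0 ∧ y ≠ 0 ∧ z ≠ 0 ∧ x ^ p + y ^ p = z ^ p := by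
  rintro ⟨x, y, z, hx, hy, hz, hxyz⟩
  obtain ⟨θ, ⟨hθ, hnc⟩, hndvd⟩ := hinf.exists_not_dvd (mul_ne_zero (mul_ne_zero hx hy) hz)
  have : Fact θ.Prime := ⟨hθ⟩
  exact hndvd (NoConsecutivePowResidues.dvd_mul_mul_of_add_pow_eq hnc hxyz)

/-- Germain's grand plan: if for an odd prime p there are infinitely many
primes θ satisfying Condition N-C for p, then Fermat's Last Theorem holds
for exponent p. -/
theorem grand_plan
    (p : ℕ) (hp : p.Prime) (hpodd : Odd p)
    (hinf : {θ : ℕ | θ.Prime ∧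
      ¬ ∃ a b : ℤ, ¬ (θ : ℤ) ∣ a ∧ ¬ (θ : ℤ) ∣ b ∧
        b ^ p ≡ a ^ p + 1 [ZMOD (θ : ℤ)]}.Infinite) :
    ¬ ∃ x y z : ℤ, x ≠ 0 ∧ y ≠ 0 ∧ z ≠ 0 ∧ x ^ p + y ^ p = z ^ p :=
  grand_plan_general p hinf
end

section
/- Let p be an odd prime such that θ = 2p + 1 is also prime. Then θ satisfies both Condition N-C for p and Condition p-N-p for p. -/
/-- If p is an odd prime and θ = 2p + 1 is also prime, then θ satisfies
both Condition N-C and Condition p-N-p for p. -/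
theorem germain_prime_satisfies_conditions
    (p : ℕ) (hp : p.Prime) (hpodd : Odd p) (hθ : (2 * p + 1).Prime) :
    (¬ ∃ a b : ℤ, ¬ ((2 * p + 1 : ℕ) : ℤ) ∣ a ∧ ¬ ((2 * p + 1 : ℕ) : ℤ) ∣ b ∧
        b ^ p ≡ a ^ p + 1 [ZMOD ((2 * p + 1 : ℕ) : ℤ)]) ∧
    (¬ ∃ c : ℤ, c ^ p ≡ (p : ℤ) [ZMOD ((2 * p + 1 : ℕ) : ℤ)]) := by
  haveI : Fact (2 * p + 1).Prime := ⟨hθ⟩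
  have hp2 : p ≠ 2 := by rintro rfl; simp [Nat.odd_iff] at hpodd
  have hp3 : 3 ≤ p := by have := hp.two_le; omega
  have key : ∀ x : ZMod (2 * p + 1), x ≠ 0 → x ^ p = 1 ∨ x ^ p = -1 := by
    intro x hx
    have h1 : x ^ p * x ^ p = 1 := by
      rw [← pow_add]
      have h2 : p + p = 2 * p + 1 - 1 := by omega
      rw [h2]
      exact ZMod.pow_card_sub_one_eq_one hx
    exact mul_self_eq_one_iff.mp h1
  constructor
  · rintro ⟨a, b, ha, hb, hmod⟩
    have ha' : (a : ZMod (2 * p + 1)) ≠ 0 :=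
      fun h0 => ha ((ZMod.intCast_zmod_eq_zero_iff_dvd a _).mp h0)
    have hb' : (b : ZMod (2 * p + 1)) ≠ 0 :=
      fun h0 => hb ((ZMod.intCast_zmod_eq_zero_iff_dvd b _).mp h0)
    have heq : (b : ZMod (2 * p + 1)) ^ p = (a : ZMod (2 * p + 1)) ^ p + 1 := by
      have h := (ZMod.intCast_eq_intCast_iff _ _ _).mpr hmod
      push_cast at h
      exact h
    have small : ∀ k : ℤ, 0 < k → ((k : ZMod (2 * p + 1)) = 0) → k < 2 * p + 1 → False := by
      intro k hk h0 hlt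
      have hd : ((2 * p + 1 : ℕ) : ℤ) ∣ k := (ZMod.intCast_zmod_eq_zero_iff_dvd k _).mp h0
      have := Int.le_of_dvd hk hd
      push_cast at this
      omega
    rcases key _ ha' with h1 | h1 <;> rcases key _ hb' with h2 | h2 <;>
        rw [h1, h2] at heq
    · exact small 1 (by norm_num) (by push_cast; linear_combination -heq) (by omega)
    · exact small 3 (by norm_num) (by push_cast; linear_combination -heq) (by omega)
    · exact small 1 (by norm_num) (by push_cast; linear_combination heq) (by omega)
    · exact small 1 (by norm_num) (by push_cast; linear_combination -heq) (by omega)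
  · rintro ⟨c, hmod⟩
    have heq : (c : ZMod (2 * p + 1)) ^ p = (p : ZMod (2 * p + 1)) := by
      have h := (ZMod.intCast_eq_intCast_iff _ _ _).mpr hmod
      push_cast at h
      exact h
    have small : ∀ k : ℤ, 0 < k → ((k : ZMod (2 * p + 1)) = 0) → k < 2 * p + 1 → False := by
      intro k hk h0 hlt
      have hd : ((2 * p + 1 : ℕ) : ℤ) ∣ k := (ZMod.intCast_zmod_eq_zero_iff_dvd k _).mp h0
      have := Int.le_of_dvd hk hd
      push_cast at this
      omega
    by_cases hc : (c : ZMod (2 * p + 1)) = 0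
    · rw [hc, zero_pow hp.ne_zero] at heq
      exact small (p : ℤ) (by exact_mod_cast hp.pos) (by push_cast; linear_combination -heq)
        (by omega)
    · rcases key _ hc with h | h <;> rw [h] at heq
      · exact small ((p : ℤ) - 1) (by omega)
          (by push_cast; linear_combination -heq) (by omega)
      · exact small ((p : ℤ) + 1) (by omega)
          (by push_cast; linear_combination -heq) (by omega)
end

section
/- Let p be an odd prime such that 2p + 1 is also prime (a Germain prime). Then for all pairwise coprime nonzero integers x, y, z with x^p + y^p = z^p, p^2 divides one of x, y, z. -/
/-!
Write the equation as `x ^ p + y ^ p + z ^ p = 0` and let `q = 2p + 1`. Modulo `q` a `p`-th power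
is `0` or `±1`, and three signs cannot add up to `0`, so `q` divides one of `x, y, z`, say `x`.

If `p` divides none of them, the Barlow relations say that `y + z`, `x + z`, `x + y` and
`(y ^ p + z ^ p) / (y + z)` are `p`-th powers. Reducing modulo `q` with `q ∣ x` first forces
`q ∣ y + z`, and then `(y ^ p + z ^ p) / (y + z) ≡ p y ^ (p - 1) ≡ p`, so `p ≡ ±1 (mod q)`,
which is absurd.

If `p ∣ x`, Fermat's little theorem applied to the `p`-th roots of `x + y` and `x + z` gives
`p² ∣ (x + y) + (x + z)`, while lifting the exponent in `y ^ p + z ^ p = (-x) ^ p` gives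
`p² ∣ y + z`; hence `p² ∣ 2x`.
-/

open Finset

section Cofactor

variable {R : Type*} [CommRing R]

def addPowCofactor (n : ℕ) (a b : R) : R := ∑ i ∈ range n, a ^ i * (-b) ^ (n - 1 - i)

theorem add_mul_addPowCofactor {n : ℕ} (hn : Odd n) (a b : R) :
    (a + b) * addPowCofactor n a b = a ^ n + b ^ n := by
  rw [addPowCofactor, mul_comm, ← sub_neg_eq_add, geom_sum₂_mul, hn.neg_pow, sub_neg_eq_add]

theorem dvd_addPowCofactor_iff {n : ℕ} {d a b : R} (h : d ∣ a + b) :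
    d ∣ addPowCofactor n a b ↔ d ∣ n * a ^ (n - 1) :=
  dvd_geom_sum₂_iff_of_dvd_sub' (by rwa [sub_neg_eq_add])

theorem addPowCofactor_self_neg (n : ℕ) (a : R) : addPowCofactor n a (-a) = n * a ^ (n - 1) := by
  rw [addPowCofactor, neg_neg, geom_sum₂_self]

theorem Int.cast_addPowCofactor (n : ℕ) (a b : ℤ) :
    ((addPowCofactor n a b : ℤ) : R) = addPowCofactor n (a : R) (b : R) := by
  simp [addPowCofactor]

theorem sq_dvd_pow_add_pow_of_dvd_add {n : ℕ} (hn : Odd n) {a b : R} (h : (n : R) ∣ a + b) :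
    (n : R) ^ 2 ∣ a ^ n + b ^ n := by
  rw [← add_mul_addPowCofactor hn, sq]
  exact mul_dvd_mul h ((dvd_addPowCofactor_iff h).mpr (dvd_mul_right _ _))

end Cofactor

section Integers

variable {p : ℕ}

theorem Int.dvd_add_of_dvd_pow_add_pow_s4 (hp : p.Prime) {a b : ℤ} (h : (p : ℤ) ∣ a ^ p + b ^ p) :
    (p : ℤ) ∣ a + b := by
  have := Fact.mk hp
  rw [← ZMod.intCast_zmod_eq_zero_iff_dvd] at h ⊢
  push_cast at h ⊢
  rwa [ZMod.pow_card, ZMod.pow_card] at h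

theorem Int.pow_dvd_add_of_pow_succ_dvd_pow_add_pow (hp : p.Prime) (hodd : Odd p) {a b : ℤ}
    {k : ℕ} (hab : (p : ℤ) ∣ a + b) (ha : ¬ (p : ℤ) ∣ a) (h : (p : ℤ) ^ (k + 1) ∣ a ^ p + b ^ p) :
    (p : ℤ) ^ k ∣ a + b := by
  have hfin : FiniteMultiplicity p p := Nat.finiteMultiplicity_iff.mpr ⟨hp.ne_one, hp.pos⟩
  rw [pow_dvd_iff_le_emultiplicity, Int.emultiplicity_pow_add_pow hp hodd hab ha hodd,
    hfin.emultiplicity_self, Nat.cast_add, Nat.cast_one] at h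
  exact pow_dvd_of_le_emultiplicity ((ENat.add_le_add_iff_right ENat.one_ne_top).mp h)

theorem isCoprime_add_addPowCofactor (hp : p.Prime) {a b : ℤ} (hab : IsCoprime a b)
    (h : ¬ (p : ℤ) ∣ a + b) : IsCoprime (a + b) (addPowCofactor p a b) := by
  refine isCoprime_of_prime_dvd (fun ⟨h0, _⟩ => h (h0 ▸ dvd_zero _)) fun ℓ hℓ hℓab hℓE => h ?_
  have hℓa : ¬ ℓ ∣ a := fun hℓa =>
    hℓ.not_isUnit (hab.isUnit_of_dvd' hℓa (by simpa using dvd_sub hℓab hℓa))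
  have hℓp : ℓ ∣ p := ((hℓ.dvd_or_dvd ((dvd_addPowCofactor_iff hℓab).mp hℓE)).resolve_right
    fun hℓa' => hℓa (hℓ.dvd_of_dvd_pow hℓa'))
  exact ((hℓ.associated_of_dvd (Nat.prime_iff_prime_int.mp hp) hℓp).dvd_iff_dvd_left).mp hℓab

theorem barlow_relations (hp : p.Prime) (hodd : Odd p) {a b c : ℤ} (hab : IsCoprime a b)
    (h : a ^ p + b ^ p + c ^ p = 0) (hc : ¬ (p : ℤ) ∣ c) :
    (∃ s, a + b = s ^ p) ∧ ∃ t, addPowCofactor p a b = t ^ p := by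
  have hprod : (a + b) * addPowCofactor p a b = (-c) ^ p := by
    rw [add_mul_addPowCofactor hodd, hodd.neg_pow]
    linear_combination h
  have hpab : ¬ (p : ℤ) ∣ a + b := fun hpab => hc <| dvd_neg.mp <|
    (Nat.prime_iff_prime_int.mp hp).dvd_of_dvd_pow (hprod ▸ hpab.mul_right _)
  exact Int.eq_pow_of_mul_eq_pow_odd (isCoprime_add_addPowCofactor hp hab hpab) hodd hprod

end Integers

section GermainPrime

variable {p q : ℕ} [Fact q.Prime]

theorem two_mul_natCast_add_one_eq_zero (hq : q = 2 * p + 1) : 2 * (p : ZMod q) + 1 = 0 := by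
  have h : ((2 * p + 1 : ℕ) : ZMod q) = 0 := by rw [← hq, ZMod.natCast_self]
  exact_mod_cast h

theorem three_ne_zero_of_eq_two_mul_add_one (hq : q = 2 * p + 1) (hp : 2 ≤ p) :
    (3 : ZMod q) ≠ 0 := by
  intro h
  have h3 : q ∣ 3 := (ZMod.natCast_eq_zero_iff 3 q).mp (by exact_mod_cast h)
  have := Nat.le_of_dvd (by norm_num) h3
  omega

theorem pow_eq_one_or_neg_one (hq : q = 2 * p + 1) {a : ZMod q} (ha : a ≠ 0) :
    a ^ p = 1 ∨ a ^ p = -1 := by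
  have h : q / 2 = p := by omega
  simpa [h] using ZMod.pow_div_two_eq_neg_one_or_one q ha

theorem eq_zero_or_eq_zero_or_eq_zero_of_pow_add_pow_add_pow_eq_zero (hq : q = 2 * p + 1)
    (hp : 2 ≤ p) {a b c : ZMod q} (h : a ^ p + b ^ p + c ^ p = 0) : a = 0 ∨ b = 0 ∨ c = 0 := by
  by_contra! hne
  have h3 := three_ne_zero_of_eq_two_mul_add_one hq hp
  rcases pow_eq_one_or_neg_one hq hne.1 with ha | ha <;>
    rcases pow_eq_one_or_neg_one hq hne.2.1 with hb | hb <;>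
    rcases pow_eq_one_or_neg_one hq hne.2.2 with hc | hc <;>
    rw [ha, hb, hc] at h
  all_goals first
    | exact h3 (by linear_combination h)
    | exact h3 (by linear_combination -h)
    | exact one_ne_zero (by linear_combination h)
    | exact one_ne_zero (by linear_combination -h)

theorem ne_zero_of_barlow_relations (hq : q = 2 * p + 1) (hp : 2 ≤ p) (hodd : Odd p)
    {x y z a b c t : ZMod q} (hy : y ≠ 0) (hz : z ≠ 0) (ha : a ^ p = y + z) (hb : b ^ p = x + z)
    (hc : c ^ p = x + y) (ht : t ^ p = addPowCofactor p y z) : x ≠ 0 := by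
  rintro rfl
  rw [zero_add] at hb hc
  have hp0 : p ≠ 0 := by omega
  have hb0 : b ≠ 0 := by rintro rfl; exact hz (by rw [← hb, zero_pow hp0])
  have hc0 : c ≠ 0 := by rintro rfl; exact hy (by rw [← hc, zero_pow hp0])
  have ha0 : a = 0 := by
    have := eq_zero_or_eq_zero_or_eq_zero_of_pow_add_pow_add_pow_eq_zero hq hp (a := b) (b := c)
      (c := -a) (by rw [hodd.neg_pow, ha, hb, hc]; ring)
    simpa [hb0, hc0] using this
  have hzy : z = -y := by
    rw [ha0, zero_pow hp0] at ha
    linear_combination -ha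
  have hy1 : y ^ (p - 1) = 1 := by
    rw [← hc]
    rcases pow_eq_one_or_neg_one hq hc0 with h | h <;> rw [h]
    · exact one_pow _
    · exact (Nat.Odd.sub_odd hodd odd_one).neg_one_pow
  have htp : t ^ p = p := by rw [ht, hzy, addPowCofactor_self_neg, hy1, mul_one]
  have h2p := two_mul_natCast_add_one_eq_zero hq
  have ht0 : t ≠ 0 := by
    rintro rfl
    rw [zero_pow hp0] at htp
    exact one_ne_zero (by linear_combination h2p + (2 : ZMod q) * htp)
  rcases pow_eq_one_or_neg_one hq ht0 with h | h
  · exact three_ne_zero_of_eq_two_mul_add_one hq hp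
      (by linear_combination h2p - (2 : ZMod q) * h + (2 : ZMod q) * htp)
  · exact one_ne_zero (by linear_combination -h2p + (2 : ZMod q) * h - (2 : ZMod q) * htp)

end GermainPrime

section FermatEquation

variable {p : ℕ}

theorem Int.dvd_or_dvd_or_dvd_of_dvd_pow_add_pow_add_pow {q : ℕ} [Fact q.Prime]
    (hq : q = 2 * p + 1) (hp : 2 ≤ p) {a b c : ℤ} (h : (q : ℤ) ∣ a ^ p + b ^ p + c ^ p) :
    (q : ℤ) ∣ a ∨ (q : ℤ) ∣ b ∨ (q : ℤ) ∣ c := by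
  simp only [← ZMod.intCast_zmod_eq_zero_iff_dvd] at h ⊢
  push_cast at h
  exact eq_zero_or_eq_zero_or_eq_zero_of_pow_add_pow_add_pow_eq_zero hq hp h

theorem not_dvd_of_pow_add_pow_add_pow_eq_zero {q : ℕ} [Fact q.Prime] (hq : q = 2 * p + 1)
    (hp : p.Prime) (hodd : Odd p) {x y z : ℤ} (hxy : IsCoprime x y) (hyz : IsCoprime y z)
    (hxz : IsCoprime x z) (h : x ^ p + y ^ p + z ^ p = 0) (hpx : ¬ (p : ℤ) ∣ x)
    (hpy : ¬ (p : ℤ) ∣ y) (hpz : ¬ (p : ℤ) ∣ z) : ¬ (q : ℤ) ∣ x := by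
  intro hqx
  obtain ⟨⟨a, ha⟩, t, ht⟩ := barlow_relations hp hodd hyz (by linear_combination h) hpx
  obtain ⟨⟨b, hb⟩, -⟩ := barlow_relations hp hodd hxz (by linear_combination h) hpy
  obtain ⟨⟨c, hc⟩, -⟩ := barlow_relations hp hodd hxy h hpz
  have hq_prime : Prime (q : ℤ) := Nat.prime_iff_prime_int.mp Fact.out
  have hqy : ¬ (q : ℤ) ∣ y := fun hqy => hq_prime.not_isUnit (hxy.isUnit_of_dvd' hqx hqy)
  have hqz : ¬ (q : ℤ) ∣ z := fun hqz => hq_prime.not_isUnit (hxz.isUnit_of_dvd' hqx hqz)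
  rw [← ZMod.intCast_zmod_eq_zero_iff_dvd] at hqx hqy hqz
  have cast {m n : ℤ} (e : m = n) : (m : ZMod q) = n := congrArg _ e
  refine ne_zero_of_barlow_relations (a := a) (b := b) (c := c) (t := t) hq hp.two_le hodd hqy hqz
    (by exact_mod_cast cast ha.symm) (by exact_mod_cast cast hb.symm)
    (by exact_mod_cast cast hc.symm) ?_ hqx
  rw [← Int.cast_addPowCofactor]
  exact_mod_cast cast ht.symm

theorem pow_add_pow_add_pow_ne_zero_of_not_dvd (hp : p.Prime) (hodd : Odd p)
    (hq : (2 * p + 1).Prime) {x y z : ℤ} (hxy : IsCoprime x y) (hyz : IsCoprime y z)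
    (hxz : IsCoprime x z) (hpx : ¬ (p : ℤ) ∣ x) (hpy : ¬ (p : ℤ) ∣ y) (hpz : ¬ (p : ℤ) ∣ z) :
    x ^ p + y ^ p + z ^ p ≠ 0 := by
  intro h
  have := Fact.mk hq
  rcases Int.dvd_or_dvd_or_dvd_of_dvd_pow_add_pow_add_pow rfl hp.two_le (h ▸ dvd_zero _) with
    hqx | hqy | hqz
  · exact not_dvd_of_pow_add_pow_add_pow_eq_zero rfl hp hodd hxy hyz hxz h hpx hpy hpz hqx
  · exact not_dvd_of_pow_add_pow_add_pow_eq_zero rfl hp hodd hxy.symm hxz hyz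
      (by linear_combination h) hpy hpx hpz hqy
  · exact not_dvd_of_pow_add_pow_add_pow_eq_zero rfl hp hodd hxz.symm hxy hyz.symm
      (by linear_combination h) hpz hpx hpy hqz

theorem sq_dvd_of_dvd_of_pow_add_pow_add_pow_eq_zero (hp : p.Prime) (hodd : Odd p) {x y z : ℤ}
    (hxy : IsCoprime x y) (hxz : IsCoprime x z) (h : x ^ p + y ^ p + z ^ p = 0)
    (hpx : (p : ℤ) ∣ x) : (p : ℤ) ^ 2 ∣ x := by
  have hp_prime : Prime (p : ℤ) := Nat.prime_iff_prime_int.mp hp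
  have hp3 : 3 ≤ p := by
    have := hp.two_le
    rcases hodd with ⟨k, hk⟩
    omega
  have hpy : ¬ (p : ℤ) ∣ y := fun hpy => hp_prime.not_isUnit (hxy.isUnit_of_dvd' hpx hpy)
  have hpz : ¬ (p : ℤ) ∣ z := fun hpz => hp_prime.not_isUnit (hxz.isUnit_of_dvd' hpx hpz)
  obtain ⟨⟨b, hb⟩, -⟩ := barlow_relations hp hodd hxz (by linear_combination h) hpy
  obtain ⟨⟨c, hc⟩, -⟩ := barlow_relations hp hodd hxy h hpz
  have hyz_pow : y ^ p + z ^ p = (-x) ^ p := by rw [hodd.neg_pow]; linear_combination h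
  have hyz : (p : ℤ) ∣ y + z := Int.dvd_add_of_dvd_pow_add_pow_s4 hp
    (hyz_pow ▸ (dvd_neg.mpr hpx).pow (by omega))
  have hbc_pow : b ^ p + c ^ p = 2 * x + (y + z) := by rw [← hb, ← hc]; ring
  have hbc : (p : ℤ) ∣ b + c :=
    Int.dvd_add_of_dvd_pow_add_pow_s4 hp (hbc_pow ▸ dvd_add (hpx.mul_left 2) hyz)
  have hyz_sq : (p : ℤ) ^ 2 ∣ y + z := by
    have h' : (p : ℤ) ^ (p - 1 + 1) ∣ y ^ p + z ^ p := by
      rw [Nat.sub_add_cancel hp.one_le, hyz_pow]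
      exact pow_dvd_pow_of_dvd (dvd_neg.mpr hpx) p
    exact (pow_dvd_pow _ (by omega)).trans
      (Int.pow_dvd_add_of_pow_succ_dvd_pow_add_pow hp hodd hyz hpy h')
  have h2x : (p : ℤ) ^ 2 ∣ 2 * x := by
    have := dvd_sub (sq_dvd_pow_add_pow_of_dvd_add hodd hbc) hyz_sq
    rwa [hbc_pow, add_sub_cancel_right] at this
  have hp2 : ¬ (p : ℤ) ∣ 2 := fun h2 => by
    have := Int.le_of_dvd two_pos h2
    omega
  exact hp_prime.pow_dvd_of_dvd_mul_left 2 hp2 h2x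

end FermatEquation

theorem sophie_germain_for_germain_primes_general
    (p : ℕ) (hp : p.Prime) (hpodd : Odd p) (hgp : (2 * p + 1).Prime)
    (x y z : ℤ)
    (hxy : IsCoprime x y) (hyz : IsCoprime y z) (hxz : IsCoprime x z)
    (hfermat : x ^ p + y ^ p = z ^ p) :
    (p : ℤ) ^ 2 ∣ x ∨ (p : ℤ) ^ 2 ∣ y ∨ (p : ℤ) ^ 2 ∣ z := by
  have h : x ^ p + y ^ p + (-z) ^ p = 0 := by rw [hpodd.neg_pow]; linear_combination hfermat
  by_cases hpx : (p : ℤ) ∣ x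
  · exact Or.inl (sq_dvd_of_dvd_of_pow_add_pow_add_pow_eq_zero hp hpodd hxy hxz.neg_right h hpx)
  by_cases hpy : (p : ℤ) ∣ y
  · exact Or.inr (Or.inl (sq_dvd_of_dvd_of_pow_add_pow_add_pow_eq_zero hp hpodd hxy.symm
      hyz.neg_right (by linear_combination h) hpy))
  by_cases hpz : (p : ℤ) ∣ z
  · refine Or.inr (Or.inr (dvd_neg.mp ?_))
    exact sq_dvd_of_dvd_of_pow_add_pow_add_pow_eq_zero hp hpodd hxz.neg_right.symm
      hyz.neg_right.symm (by linear_combination h) (dvd_neg.mpr hpz)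
  exact absurd h (pow_add_pow_add_pow_ne_zero_of_not_dvd hp hpodd hgp hxy hyz.neg_right
    hxz.neg_right hpx hpy (by rwa [dvd_neg]))

/-- If p is an odd prime with 2p + 1 also prime (a Germain prime), then in any
solution of the Fermat equation with pairwise coprime nonzero integers,
p² divides one of x, y, z. -/
theorem sophie_germain_for_germain_primes
    (p : ℕ) (hp : p.Prime) (hpodd : Odd p) (hgp : (2 * p + 1).Prime)
    (x y z : ℤ) (hx : x ≠ 0) (hy : y ≠ 0) (hz : z ≠ 0)
    (hxy : IsCoprime x y) (hyz : IsCoprime y z) (hxz : IsCoprime x z)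
    (hfermat : x ^ p + y ^ p = z ^ p) :
    (p : ℤ) ^ 2 ∣ x ∨ (p : ℤ) ^ 2 ∣ y ∨ (p : ℤ) ^ 2 ∣ z :=
  sophie_germain_for_germain_primes_general p hp hpodd hgp x y z hxy hyz hxz hfermat
end

section
/- Let p be an odd prime and θ a prime with θ ≡ 1 (mod 6p) (i.e., θ = 2Np + 1 with N a multiple of 3). Then θ fails Condition N-C for p: there exist integers a, b with θ ∤ a, θ ∤ b, and b^p ≡ a^p + 1 (mod θ). -/
/-- If θ ≡ 1 (mod 6p) (i.e. θ = 2Np + 1 with N a multiple of 3), then θ fails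
Condition N-C for p: there are two nonzero consecutive p-th power residues. -/
theorem NC_fails_when_three_divides_N
    (p θ : ℕ) (hp : p.Prime) (hpodd : Odd p) (hθ : θ.Prime)
    (hform : θ ≡ 1 [MOD 6 * p]) :
    ∃ a b : ℤ, ¬ (θ : ℤ) ∣ a ∧ ¬ (θ : ℤ) ∣ b ∧ b ^ p ≡ a ^ p + 1 [ZMOD (θ : ℤ)] := by
  haveI : Fact θ.Prime := ⟨hθ⟩
  have hθ1 : 1 < θ := hθ.one_lt
  have hdvd : 6 * p ∣ θ - 1 := (Nat.modEq_iff_dvd' (by omega)).mp hform.symm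
  obtain ⟨k, hk⟩ := hdvd
  have hppos : 0 < p := hp.pos
  have hkpos : 0 < k := by
    rcases Nat.eq_zero_or_pos k with h | h
    · rw [h, mul_zero] at hk; omega
    · exact h
  -- a generator of the unit group
  obtain ⟨g, hg⟩ := IsCyclic.exists_generator (α := (ZMod θ)ˣ)
  have hord : orderOf g = 6 * p * k := by
    rw [orderOf_eq_card_of_forall_mem_zpowers hg, Nat.card_eq_fintype_card,
      ZMod.card_units_eq_totient, Nat.totient_prime hθ]
    omega
  -- field elements
  set u : ZMod θ := (g : ZMod θ) with hu
  have hu0 : u ≠ 0 := g.ne_zero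
  set w : ZMod θ := u ^ (p * k) with hw
  -- w ^ 3 = -1
  have hv2 : (u ^ (3 * (p * k))) ^ 2 = 1 := by
    rw [← pow_mul, ← Units.val_pow_eq_pow_val, ← Units.val_one]
    congr 1
    have h6 : 3 * (p * k) * 2 = 6 * p * k := by ring
    rw [h6, ← hord, pow_orderOf_eq_one]
  have hv1 : u ^ (3 * (p * k)) ≠ 1 := by
    intro h
    have : g ^ (3 * (p * k)) = 1 := by
      apply Units.ext
      rw [Units.val_pow_eq_pow_val, Units.val_one]; exact h
    have hd := orderOf_dvd_of_pow_eq_one this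
    rw [hord] at hd
    have := Nat.le_of_dvd (by positivity) hd
    nlinarith
  have hvneg : u ^ (3 * (p * k)) = -1 := by
    have : (u ^ (3 * (p * k)) - 1) * (u ^ (3 * (p * k)) + 1) = 0 := by
      have := hv2; ring_nf; ring_nf at this; linear_combination this
    rcases mul_eq_zero.mp this with h | h
    · exact absurd (by linear_combination h) hv1
    · linear_combination h
  have hw3 : w ^ 3 = -1 := by
    rw [hw, ← pow_mul, mul_comm (p * k) 3, hvneg]
  -- w ≠ -1
  have hwne : w ≠ -1 := by
    intro h
    have h2 : u ^ (2 * (p * k)) = 1 := by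
      rw [mul_comm, pow_mul, ← hw, h]; ring
    have : g ^ (2 * (p * k)) = 1 := by
      apply Units.ext
      rw [Units.val_pow_eq_pow_val, Units.val_one]; exact h2
    have hd := orderOf_dvd_of_pow_eq_one this
    rw [hord] at hd
    have := Nat.le_of_dvd (by positivity) hd
    nlinarith
  -- w ^ 2 + 1 = w
  have hkey : w ^ 2 + 1 = w := by
    have hfac : (w + 1) * (w ^ 2 - w + 1) = 0 := by linear_combination hw3
    rcases mul_eq_zero.mp hfac with h | h
    · exact absurd (by linear_combination h) hwne
    · linear_combination h
  -- the witnesses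
  set x : ZMod θ := u ^ (2 * k) with hx
  set y : ZMod θ := u ^ k with hy
  have hx0 : x ≠ 0 := pow_ne_zero _ hu0
  have hy0 : y ≠ 0 := pow_ne_zero _ hu0
  have hxp : x ^ p = w ^ 2 := by rw [hx, hw, ← pow_mul, ← pow_mul]; ring_nf
  have hyp : y ^ p = w := by rw [hy, hw, ← pow_mul, mul_comm k p]
  have hmain : y ^ p = x ^ p + 1 := by rw [hxp, hyp, hkey]
  refine ⟨(x.val : ℤ), (y.val : ℤ), ?_, ?_, ?_⟩
  · rw [← ZMod.intCast_zmod_eq_zero_iff_dvd]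
    push_cast
    rw [ZMod.natCast_val, ZMod.cast_id]
    exact hx0
  · rw [← ZMod.intCast_zmod_eq_zero_iff_dvd]
    push_cast
    rw [ZMod.natCast_val, ZMod.cast_id]
    exact hy0
  · have : (((y.val : ℤ) ^ p : ℤ) : ZMod θ) = (((x.val : ℤ) ^ p + 1 : ℤ) : ZMod θ) := by
      push_cast
      rw [ZMod.natCast_val, ZMod.natCast_val, ZMod.cast_id, ZMod.cast_id]
      exact hmain
    exact (ZMod.intCast_eq_intCast_iff _ _ _).mp this
end

section
/- Let p be an odd prime, N a positive integer, and θ = 2Np + 1 a prime. Then there exists an integer c with c^p ≡ p (mod θ) if and only if there exists an integer d with d^p ≡ 2N (mod θ); that is, p is a p-th power residue modulo θ exactly when 2N is. -/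
/-- For a prime θ = 2Np + 1, p is a p-th power residue modulo θ if and only
if 2N is a p-th power residue modulo θ. -/
theorem p_pth_power_iff_twoN
    (p N : ℕ) (hp : p.Prime) (hpodd : Odd p) (hN : 0 < N)
    (hθ : (2 * N * p + 1).Prime) :
    (∃ c : ℤ, c ^ p ≡ (p : ℤ) [ZMOD ((2 * N * p + 1 : ℕ) : ℤ)]) ↔
      (∃ d : ℤ, d ^ p ≡ ((2 * N : ℕ) : ℤ) [ZMOD ((2 * N * p + 1 : ℕ) : ℤ)]) := by
  set θ := 2 * N * p + 1 with hθdef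
  haveI : Fact θ.Prime := ⟨hθ⟩
  -- translate to ZMod θ
  have iff1 : ∀ a : ℕ, (∃ c : ℤ, c ^ p ≡ (a : ℤ) [ZMOD ((θ : ℕ) : ℤ)]) ↔
      ∃ c : ZMod θ, c ^ p = (a : ZMod θ) := by
    intro a
    constructor
    · rintro ⟨c, hc⟩
      refine ⟨(c : ZMod θ), ?_⟩
      have := (ZMod.intCast_eq_intCast_iff _ _ _).mpr hc
      push_cast at this
      exact this
    · rintro ⟨c, hc⟩
      refine ⟨(c.val : ℤ), ?_⟩
      rw [← ZMod.intCast_eq_intCast_iff]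
      push_cast
      rw [ZMod.natCast_val, ZMod.cast_id]
      exact hc
  rw [iff1, iff1]
  have key : ((2 * N : ℕ) : ZMod θ) * (p : ZMod θ) = -1 := by
    have h0 : ((2 * N * p + 1 : ℕ) : ZMod θ) = 0 := ZMod.natCast_self θ
    push_cast at h0 ⊢
    linear_combination h0
  have hp0 : (p : ZMod θ) ≠ 0 := by
    rw [Ne, ZMod.natCast_eq_zero_iff]
    intro h
    have h1 := Nat.le_of_dvd hp.pos h
    have h2 : 2 * N * p + 1 ≤ p := h1
    nlinarith [hp.pos, hN]
  have hN0 : ((2 * N : ℕ) : ZMod θ) ≠ 0 := by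
    intro h
    rw [h, zero_mul] at key
    have h1 : (1 : ZMod θ) = 0 := by linear_combination key
    exact one_ne_zero h1
  constructor
  · rintro ⟨c, hc⟩
    have hc0 : c ≠ 0 := by
      intro h; rw [h, zero_pow hp.ne_zero] at hc; exact hp0 hc.symm
    refine ⟨-c⁻¹, ?_⟩
    rw [neg_pow, inv_pow, hc, Odd.neg_one_pow hpodd]
    have h2 : ((2 * N : ℕ) : ZMod θ) * (p : ZMod θ) =
        (-1 * ((p : ZMod θ))⁻¹) * (p : ZMod θ) := by
      rw [key, neg_one_mul, neg_mul, inv_mul_cancel₀ hp0]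
    exact (mul_right_cancel₀ hp0 h2).symm
  · rintro ⟨d, hd⟩
    have hd0 : d ≠ 0 := by
      intro h; rw [h, zero_pow hp.ne_zero] at hd; exact hN0 hd.symm
    refine ⟨-d⁻¹, ?_⟩
    rw [neg_pow, inv_pow, hd, Odd.neg_one_pow hpodd]
    have h2 : (p : ZMod θ) * ((2 * N : ℕ) : ZMod θ) =
        (-1 * (((2 * N : ℕ) : ZMod θ))⁻¹) * ((2 * N : ℕ) : ZMod θ) := by
      rw [mul_comm ((p : ZMod θ)), key, neg_one_mul, neg_mul, inv_mul_cancel₀ hN0]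
    exact (mul_right_cancel₀ hN0 h2).symm
end

section
/- Let p be an odd prime, let a, b be natural numbers with p not dividing a + 1, set N = 2^a · p^b, and suppose θ = 2Np + 1 is prime. If θ satisfies Condition 2-N-p for p, then θ satisfies Condition p-N-p for p. -/
/-! Write M = 2N, so θ = Mp + 1 and 2^(a+1) p^(b+1) = θ - 1 ≡ -1 (mod θ). Since (ℤ/θ)ˣ is cyclic
of order Mp, a unit is a p-th power iff its M-th power is 1. If p is a p-th power, then p^M = 1,
and raising the congruence to the even power M gives (2^M)^(a+1) = 1. Together with
(2^M)^p = 1 and p ∤ a + 1 this forces 2^M = 1, so 2 is a p-th power. -/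

theorem IsCyclic.exists_pow_eq_of_pow_eq_one {G : Type*} [CommGroup G] [IsCyclic G] [Finite G]
    {m k : ℕ} (hcard : Nat.card G = m * k) {x : G} (hx : x ^ m = 1) : ∃ y, y ^ k = x := by
  have hmk : 0 < m * k := hcard ▸ Nat.card_pos
  have hle : (powMonoidHom k : G →* G).range ≤ (powMonoidHom m).ker := by
    rintro _ ⟨y, rfl⟩
    rw [MonoidHom.mem_ker, powMonoidHom_apply, powMonoidHom_apply, ← pow_mul, mul_comm, ← hcard,
      pow_card_eq_one']
  have hcard_le :
      Nat.card (powMonoidHom m : G →* G).ker ≤ Nat.card (powMonoidHom k : G →* G).range := by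
    rw [IsCyclic.card_powMonoidHom_ker, IsCyclic.card_powMonoidHom_range, hcard,
      Nat.gcd_mul_right_left, Nat.gcd_mul_left_left,
      Nat.mul_div_cancel _ (Nat.pos_of_mul_pos_left hmk)]
  have hx_ker : x ∈ (powMonoidHom m : G →* G).ker := hx
  rw [← Subgroup.eq_of_le_of_card_ge hle hcard_le] at hx_ker
  exact hx_ker

theorem FiniteField.exists_pow_eq_iff_pow_eq_one {F : Type*} [Field F] [Fintype F] {m k : ℕ}
    (hcard : Fintype.card F = m * k + 1) {x : F} (hx : x ≠ 0) : (∃ y, y ^ k = x) ↔ x ^ m = 1 := by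
  constructor
  · rintro ⟨y, rfl⟩
    have hk : k ≠ 0 := by
      rintro rfl
      exact Fintype.one_lt_card.ne' (by simpa using hcard)
    have hy : y ≠ 0 := ne_zero_pow hk hx
    rw [← pow_mul, mul_comm, ← Nat.add_sub_cancel (m * k) 1, ← hcard]
    exact FiniteField.pow_card_sub_one_eq_one y hy
  · intro hxm
    classical
    have hunits : Nat.card Fˣ = m * k := by
      rw [Nat.card_eq_fintype_card, Fintype.card_units, hcard, Nat.add_sub_cancel]
    obtain ⟨y, hy⟩ := IsCyclic.exists_pow_eq_of_pow_eq_one hunits (x := Units.mk0 x hx)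
      (Units.ext (by simpa using hxm))
    exact ⟨y, by simpa using congrArg Units.val hy⟩

theorem exists_pow_intModEq_iff (n k : ℕ) (x : ℤ) :
    (∃ c : ℤ, c ^ k ≡ x [ZMOD n]) ↔ ∃ y : ZMod n, y ^ k = x := by
  simp_rw [← ZMod.intCast_eq_intCast_iff, Int.cast_pow]
  exact (ZMod.intCast_surjective.exists (p := fun y : ZMod n => y ^ k = x)).symm

theorem pow_pow_eq_one_of_pow_mul_pow_eq_neg_one {R : Type*} [CommMonoid R] [HasDistribNeg R]
    {u v : R} {a b M : ℕ} (hM : Even M) (huv : u ^ a * v ^ b = -1) (hv : v ^ M = 1) :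
    (u ^ M) ^ a = 1 :=
  calc (u ^ M) ^ a = (u ^ M) ^ a * (v ^ M) ^ b := by rw [hv, one_pow, mul_one]
    _ = (u ^ a * v ^ b) ^ M := by rw [mul_pow, ← pow_mul, ← pow_mul, ← pow_mul, ← pow_mul,
        mul_comm a M, mul_comm b M]
    _ = 1 := by rw [huv, hM.neg_one_pow]

theorem ZMod.natCast_ne_zero_of_pos_of_lt {q n : ℕ} (hn : 0 < n) (hnq : n < q) :
    (n : ZMod q) ≠ 0 :=
  fun h => (Nat.le_of_dvd hn ((ZMod.natCast_eq_zero_iff n q).1 h)).not_gt hnq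

theorem pNp_from_2Np_general
    (p a b : ℕ) (hp : p.Prime) (ha : ¬ p ∣ (a + 1))
    (hθ : (2 * (2 ^ a * p ^ b) * p + 1).Prime)
    (h2Np : ¬ ∃ c : ℤ, c ^ p ≡ 2 [ZMOD ((2 * (2 ^ a * p ^ b) * p + 1 : ℕ) : ℤ)]) :
    ¬ ∃ c : ℤ, c ^ p ≡ (p : ℤ) [ZMOD ((2 * (2 ^ a * p ^ b) * p + 1 : ℕ) : ℤ)] := by
  set M := 2 * (2 ^ a * p ^ b)
  set θ := M * p + 1
  have : Fact θ.Prime := ⟨hθ⟩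
  have hM : 0 < M := by have := hp.pos; positivity
  have hpθ : p < θ := Nat.lt_succ_of_le (Nat.le_mul_of_pos_left p hM)
  have hcard : Fintype.card (ZMod θ) = M * p + 1 := ZMod.card θ
  have h2 : (2 : ZMod θ) ≠ 0 := by
    exact_mod_cast ZMod.natCast_ne_zero_of_pos_of_lt two_pos (hp.two_le.trans_lt hpθ)
  have hp0 : (p : ZMod θ) ≠ 0 := ZMod.natCast_ne_zero_of_pos_of_lt hp.pos hpθ
  have h2p_neg_one : (2 : ZMod θ) ^ (a + 1) * (p : ZMod θ) ^ (b + 1) = -1 := by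
    have : ((θ : ℕ) : ZMod θ) = 0 := ZMod.natCast_self θ
    simp only [θ, M] at this
    push_cast at this
    linear_combination this
  rw [exists_pow_intModEq_iff] at h2Np ⊢
  push_cast at h2Np ⊢
  intro hp_pow
  have hpM := (FiniteField.exists_pow_eq_iff_pow_eq_one hcard hp0).1 hp_pow
  have h2Ma : ((2 : ZMod θ) ^ M) ^ (a + 1) = 1 :=
    pow_pow_eq_one_of_pow_mul_pow_eq_neg_one (even_two_mul _) h2p_neg_one hpM
  have h2Mp : ((2 : ZMod θ) ^ M) ^ p = 1 := by
    rw [← pow_mul, ← Nat.add_sub_cancel (M * p) 1, ← hcard]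
    exact FiniteField.pow_card_sub_one_eq_one 2 h2
  have hco : p.Coprime (a + 1) := (Nat.Prime.coprime_iff_not_dvd hp).2 ha
  exact h2Np ((FiniteField.exists_pow_eq_iff_pow_eq_one hcard h2).2
    ((pow_eq_one_iff_of_coprime hco).1 ⟨h2Mp, h2Ma⟩))

/-- For N = 2^a · p^b with p ∤ a + 1 and θ = 2Np + 1 prime: if 2 is not a
p-th power residue modulo θ, then neither is p. -/
theorem pNp_from_2Np
    (p a b : ℕ) (hp : p.Prime) (hpodd : Odd p) (ha : ¬ p ∣ (a + 1))
    (hθ : (2 * (2 ^ a * p ^ b) * p + 1).Prime)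
    (h2Np : ¬ ∃ c : ℤ, c ^ p ≡ 2 [ZMOD ((2 * (2 ^ a * p ^ b) * p + 1 : ℕ) : ℤ)]) :
    ¬ ∃ c : ℤ, c ^ p ≡ (p : ℤ) [ZMOD ((2 * (2 ^ a * p ^ b) * p + 1 : ℕ) : ℤ)] :=
  pNp_from_2Np_general p a b hp ha hθ h2Np
end

section
/- An odd prime θ has the property that there are no integers a, b with θ ∤ a, θ ∤ b, and b^3 ≡ a^3 + 1 (mod θ) if and only if θ = 7 or θ = 13; that is, the only odd primes admitting no two nonzero consecutive cubic residues are 7 and 13. -/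
section Aux

/-- If a prime `p` is none of 2,3,5,7,13, it does not divide any 13-smooth
number dividing `2730^6`. -/
private lemma smooth_ne_zero {p : ℕ} (hp : p.Prime) (h2 : p ≠ 2) (h3 : p ≠ 3)
    (h5 : p ≠ 5) (h7 : p ≠ 7) (h13 : p ≠ 13) {n : ℕ} (hn : n ∣ 2730 ^ 6) :
    ((n : ℕ) : ZMod p) ≠ 0 := by
  intro h
  rw [ZMod.natCast_eq_zero_iff] at h
  have hdvd : p ∣ 2730 ^ 6 := h.trans hn
  have hd : p ∣ 2730 := hp.dvd_of_dvd_pow hdvd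
  have : p ∣ 2 * (3 * (5 * (7 * 13))) := by norm_num at hd ⊢; exact hd
  rcases (hp.dvd_mul).mp this with h' | h'
  · exact h2 ((Nat.prime_dvd_prime_iff_eq hp (by norm_num)).mp h')
  rcases (hp.dvd_mul).mp h' with h'' | h''
  · exact h3 ((Nat.prime_dvd_prime_iff_eq hp (by norm_num)).mp h'')
  rcases (hp.dvd_mul).mp h'' with h3' | h3'
  · exact h5 ((Nat.prime_dvd_prime_iff_eq hp (by norm_num)).mp h3')
  rcases (hp.dvd_mul).mp h3' with h4' | h4'
  · exact h7 ((Nat.prime_dvd_prime_iff_eq hp (by norm_num)).mp h4')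
  · exact h13 ((Nat.prime_dvd_prime_iff_eq hp (by norm_num)).mp h4')

/-- Criterion: if `x ^ ((p-1)/3) = 1` then `x` is a cube in `ZMod p`. -/
private lemma cube_of_pow_eq_one {p : ℕ} [Fact p.Prime] {e : ℕ} (he : p - 1 = 3 * e)
    {x : ZMod p} (hx : x ≠ 0) (h1 : x ^ e = 1) : ∃ y : ZMod p, y ^ 3 = x := by
  have hp := (Fact.out : p.Prime)
  have he0 : e ≠ 0 := by
    rintro rfl
    have := hp.two_le
    omega
  set u : (ZMod p)ˣ := Units.mk0 x hx with hu
  obtain ⟨g, hg⟩ := IsCyclic.exists_generator (α := (ZMod p)ˣ)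
  obtain ⟨k, hk'⟩ := hg u
  have hk : g ^ k = u := hk'
  have horder : orderOf g = p - 1 := by
    rw [orderOf_eq_card_of_forall_mem_zpowers hg, Nat.card_eq_fintype_card,
      ZMod.card_units]
  have hue : u ^ e = 1 := by
    ext
    push_cast
    simpa [hu] using h1
  have hgke : g ^ (k * (e : ℤ)) = 1 := by
    rw [zpow_mul, hk]
    exact_mod_cast hue
  have hdvd : ((p - 1 : ℕ) : ℤ) ∣ k * e := by
    rw [← horder]
    exact orderOf_dvd_iff_zpow_eq_one.mpr hgke
  obtain ⟨c, hc⟩ := hdvd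
  have hke : k * (e : ℤ) = (e : ℤ) * (3 * c) := by
    rw [hc, he]
    push_cast
    ring
  have hk3 : k = 3 * c := by
    have he0' : (e : ℤ) ≠ 0 := by exact_mod_cast he0
    have : (e : ℤ) * k = (e : ℤ) * (3 * c) := by linarith [hke]
    exact mul_left_cancel₀ he0' this
  refine ⟨((g ^ c : (ZMod p)ˣ) : ZMod p), ?_⟩
  have : (g ^ c) ^ (3 : ℕ) = u := by
    rw [← zpow_natCast, ← zpow_mul]
    have hck : c * ((3 : ℕ) : ℤ) = k := by rw [hk3]; push_cast; ring
    rw [hck, hk]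
  calc ((g ^ c : (ZMod p)ˣ) : ZMod p) ^ 3 = (((g ^ c) ^ (3:ℕ) : (ZMod p)ˣ) : ZMod p) := by
        push_cast; ring
    _ = x := by rw [this]; rfl

/-- Converse criterion: cubes of nonzero elements satisfy `x ^ ((p-1)/3) = 1`. -/
private lemma pow_eq_one_of_cube {p : ℕ} [Fact p.Prime] {e : ℕ} (he : p - 1 = 3 * e)
    {x : ZMod p} (hx : x ≠ 0) (h : ∃ y : ZMod p, y ^ 3 = x) : x ^ e = 1 := by
  obtain ⟨y, hy⟩ := h
  have hy0 : y ≠ 0 := by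
    rintro rfl
    simp at hy
    exact hx hy.symm
  rw [← hy, ← pow_mul]
  have : 3 * e = p - 1 := he.symm
  rw [this]
  exact ZMod.pow_card_sub_one_eq_one hy0

/-- The hard case: a prime `p ≡ 1 (mod 3)`, other than 7 and 13, cannot avoid
two nonzero consecutive cubes. -/
private lemma case_one_mod_three {p : ℕ} (hp : p.Prime) (hodd : Odd p)
    (h3 : p % 3 = 1) (h7 : p ≠ 7) (h13 : p ≠ 13)
    (H : ∀ x : ZMod p, x ≠ 0 → x + 1 ≠ 0 → (∃ a : ZMod p, a ^ 3 = x) →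
      (∃ b : ZMod p, b ^ 3 = x + 1) → False) : False := by
  haveI : Fact p.Prime := ⟨hp⟩
  have hp2 : 2 ≤ p := hp.two_le
  have hne2 : p ≠ 2 := by rintro rfl; exact (by decide : ¬ Odd 2) hodd
  have hne3 : p ≠ 3 := by rintro rfl; omega
  have hne5 : p ≠ 5 := by rintro rfl; omega
  -- e = (p-1)/3
  obtain ⟨e, he⟩ : ∃ e, p - 1 = 3 * e := ⟨(p - 1) / 3, by omega⟩
  set K := ZMod p
  -- nonzero numerals
  have nz : ∀ n : ℕ, n ∣ 2730 ^ 6 → ((n : ℕ) : K) ≠ 0 := fun n hn =>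
    smooth_ne_zero hp hne2 hne3 hne5 h7 h13 hn
  have nz1 : (1 : K) ≠ 0 := one_ne_zero
  have nz2 : (2 : K) ≠ 0 := by have := nz 2 (by norm_num); simpa using this
  have nz3 : (3 : K) ≠ 0 := by have := nz 3 (by norm_num); simpa using this
  have nz4 : (4 : K) ≠ 0 := by have := nz 4 (by norm_num); simpa using this
  have nz5 : (5 : K) ≠ 0 := by have := nz 5 (by norm_num); simpa using this
  have nz7 : (7 : K) ≠ 0 := by have := nz 7 (by norm_num); simpa using this
  have nz8 : (8 : K) ≠ 0 := by have := nz 8 (by norm_num); simpa using this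
  have nz9 : (9 : K) ≠ 0 := by have := nz 9 (by norm_num); simpa using this
  have nz13 : (13 : K) ≠ 0 := by have := nz 13 (by norm_num); simpa using this
  have nz14 : (14 : K) ≠ 0 := by have := nz 14 (by norm_num); simpa using this
  have nz20 : (20 : K) ≠ 0 := by have := nz 20 (by norm_num); simpa using this
  have nz21 : (21 : K) ≠ 0 := by have := nz 21 (by norm_num); simpa using this
  have nz26 : (26 : K) ≠ 0 := by have := nz 26 (by norm_num); simpa using this
  have nz27 : (27 : K) ≠ 0 := by have := nz 27 (by norm_num); simpa using this
  have nz28 : (28 : K) ≠ 0 := by have := nz 28 (by norm_num); simpa using this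
  have nz63 : (63 : K) ≠ 0 := by have := nz 63 (by norm_num); simpa using this
  have nz64 : (64 : K) ≠ 0 := by have := nz 64 (by norm_num); simpa using this
  have nz65 : (65 : K) ≠ 0 := by have := nz 65 (by norm_num); simpa using this
  have nz90 : (90 : K) ≠ 0 := by have := nz 90 (by norm_num); simpa using this
  have nz91 : (91 : K) ≠ 0 := by have := nz 91 (by norm_num); simpa using this
  -- "cube" predicate machinery
  have noConsec : ∀ x y : K, y = x + 1 → x ≠ 0 → y ≠ 0 →
      (∃ a : K, a ^ 3 = x) → (∃ b : K, b ^ 3 = y) → False := by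
    rintro x y rfl hx hy hcx hcy
    exact H x hx hy hcx hcy
  have crit : ∀ x : K, x ≠ 0 → x ^ e = 1 → ∃ y : K, y ^ 3 = x :=
    fun x hx h1 => cube_of_pow_eq_one he hx h1
  have critR : ∀ x : K, x ≠ 0 → (∃ y : K, y ^ 3 = x) → x ^ e = 1 :=
    fun x hx h => pow_eq_one_of_cube he hx h
  -- concrete cubes
  have cb1 : ∃ y : K, y ^ 3 = 1 := ⟨1, by norm_num⟩
  have cb8 : ∃ y : K, y ^ 3 = 8 := ⟨2, by norm_num⟩
  have cb27 : ∃ y : K, y ^ 3 = 27 := ⟨3, by norm_num⟩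
  have cb64 : ∃ y : K, y ^ 3 = 64 := ⟨4, by norm_num⟩
  -- elementary non-cubes
  have nc2 : ¬ ∃ y : K, y ^ 3 = 2 := fun h =>
    noConsec 1 2 (by norm_num) nz1 nz2 cb1 h
  have nc7 : ¬ ∃ y : K, y ^ 3 = 7 := fun h =>
    noConsec 7 8 (by norm_num) nz7 nz8 h cb8
  have nc9 : ¬ ∃ y : K, y ^ 3 = 9 := fun h =>
    noConsec 8 9 (by norm_num) nz8 nz9 cb8 h
  have nc26 : ¬ ∃ y : K, y ^ 3 = 26 := fun h =>
    noConsec 26 27 (by norm_num) nz26 nz27 h cb27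
  have nc28 : ¬ ∃ y : K, y ^ 3 = 28 := fun h =>
    noConsec 27 28 (by norm_num) nz27 nz28 cb27 h
  have nc63 : ¬ ∃ y : K, y ^ 3 = 63 := fun h =>
    noConsec 63 64 (by norm_num) nz63 nz64 h cb64
  have nc65 : ¬ ∃ y : K, y ^ 3 = 65 := fun h =>
    noConsec 64 65 (by norm_num) nz64 nz65 cb64 h
  -- ω := 2^e, a primitive cube root of unity
  obtain ⟨ω, hω⟩ : ∃ w : K, w = (2 : K) ^ e := ⟨_, rfl⟩
  have psi3 : ∀ x : K, x ≠ 0 → (x ^ e) ^ 3 = 1 := by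
    intro x hx
    rw [← pow_mul, mul_comm e 3, ← he]
    exact ZMod.pow_card_sub_one_eq_one hx
  have hω3 : ω ^ 3 = 1 := by rw [hω]; exact psi3 2 nz2
  have hω1 : ω ≠ 1 := fun h => nc2 (crit 2 nz2 (by rw [← hω]; exact h))
  have hωq : ω ^ 2 + ω + 1 = 0 := by
    rcases mul_eq_zero.mp (show (ω - 1) * (ω ^ 2 + ω + 1) = 0 by
      linear_combination hω3) with h | h
    · exact absurd (by linear_combination h) hω1
    · exact h
  have trich : ∀ z : K, z ^ 3 = 1 → z = 1 ∨ z = ω ∨ z = ω ^ 2 := by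
    intro z hz
    rcases mul_eq_zero.mp (show (z - 1) * (z ^ 2 + z + 1) = 0 by
      linear_combination hz) with h | h
    · exact Or.inl (by linear_combination h)
    rcases mul_eq_zero.mp (show (z - ω) * (z + ω + 1) = 0 by
      linear_combination h - hωq) with h' | h'
    · exact Or.inr (Or.inl (by linear_combination h'))
    · exact Or.inr (Or.inr (by linear_combination h' - hωq))
  -- ψ(4) = ω²
  have psi4 : (4 : K) ^ e = ω ^ 2 := by
    rw [show (4 : K) = 2 ^ 2 by norm_num, ← pow_mul, mul_comm 2 e, pow_mul, hω]
  -- ψ(7) = ω²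
  have psi7ne1 : (7 : K) ^ e ≠ 1 := fun h => nc7 (crit 7 nz7 h)
  have psi28 : (28 : K) ^ e = ω ^ 2 * (7 : K) ^ e := by
    rw [show (28 : K) = 4 * 7 by norm_num, mul_pow, psi4]
  have psi28ne1 : (28 : K) ^ e ≠ 1 := fun h => nc28 (crit 28 nz28 h)
  have psi7 : (7 : K) ^ e = ω ^ 2 := by
    rcases trich _ (psi3 7 nz7) with h | h | h
    · exact absurd h psi7ne1
    · exfalso
      apply psi28ne1
      rw [psi28, h]
      linear_combination hω3
    · exact h
  -- 14 is a cube, hence 13 is not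
  have cb14 : ∃ y : K, y ^ 3 = 14 := by
    apply crit 14 nz14
    rw [show (14 : K) = 2 * 7 by norm_num, mul_pow, ← hω, psi7]
    linear_combination hω3
  have nc13 : ¬ ∃ y : K, y ^ 3 = 13 := fun h =>
    noConsec 13 14 (by norm_num) nz13 nz14 h cb14
  -- ψ(13) = ω
  have psi13ne1 : (13 : K) ^ e ≠ 1 := fun h => nc13 (crit 13 nz13 h)
  have psi26ne1 : (26 : K) ^ e ≠ 1 := fun h => nc26 (crit 26 nz26 h)
  have psi13 : (13 : K) ^ e = ω := by
    rcases trich _ (psi3 13 nz13) with h | h | h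
    · exact absurd h psi13ne1
    · exact h
    · exfalso
      apply psi26ne1
      rw [show (26 : K) = 2 * 13 by norm_num, mul_pow, ← hω, h]
      linear_combination hω3
  -- ψ(9) = ω², hence ψ(3) = ω
  have psi9ne1 : (9 : K) ^ e ≠ 1 := fun h => nc9 (crit 9 nz9 h)
  have psi63ne1 : (63 : K) ^ e ≠ 1 := fun h => nc63 (crit 63 nz63 h)
  have psi9 : (9 : K) ^ e = ω ^ 2 := by
    rcases trich _ (psi3 9 nz9) with h | h | h
    · exact absurd h psi9ne1
    · exfalso
      apply psi63ne1
      rw [show (63 : K) = 9 * 7 by norm_num, mul_pow, h, psi7]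
      linear_combination hω3
    · exact h
  have psi3val : (3 : K) ^ e = ω := by
    have h9 : ((3 : K) ^ e) ^ 2 = ω ^ 2 := by
      rw [← psi9, show (9 : K) = 3 * 3 by norm_num, mul_pow]; ring
    have h3c : ((3 : K) ^ e) ^ 3 = 1 := psi3 3 nz3
    calc (3 : K) ^ e = (3 : K) ^ e * (((3 : K) ^ e) ^ 3) := by rw [h3c]; ring
      _ = (((3 : K) ^ e) ^ 2) ^ 2 := by ring
      _ = (ω ^ 2) ^ 2 := by rw [h9]
      _ = ω := by linear_combination ω * hω3
  -- 91 is a cube, hence 90 is not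
  have cb91 : ∃ y : K, y ^ 3 = 91 := by
    apply crit 91 nz91
    rw [show (91 : K) = 7 * 13 by norm_num, mul_pow, psi7, psi13]
    linear_combination hω3
  have nc90 : ¬ ∃ y : K, y ^ 3 = 90 := fun h =>
    noConsec 90 91 (by norm_num) nz90 nz91 h cb91
  -- ψ(5) = ω
  have psi65ne1 : (65 : K) ^ e ≠ 1 := fun h => nc65 (crit 65 nz65 h)
  have psi90ne1 : (90 : K) ^ e ≠ 1 := fun h => nc90 (crit 90 nz90 h)
  have psi5 : (5 : K) ^ e = ω := by
    rcases trich _ (psi3 5 nz5) with h | h | h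
    · exfalso
      apply psi90ne1
      rw [show (90 : K) = 2 * (9 * 5) by norm_num, mul_pow, mul_pow, ← hω, psi9, h]
      linear_combination hω3
    · exact h
    · exfalso
      apply psi65ne1
      rw [show (65 : K) = 5 * 13 by norm_num, mul_pow, h, psi13]
      linear_combination hω3
  -- 20 and 21 are both cubes: contradiction
  have cb20 : ∃ y : K, y ^ 3 = 20 := by
    apply crit 20 nz20
    rw [show (20 : K) = 4 * 5 by norm_num, mul_pow, psi4, psi5]
    linear_combination hω3
  have cb21 : ∃ y : K, y ^ 3 = 21 := by
    apply crit 21 nz21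
    rw [show (21 : K) = 3 * 7 by norm_num, mul_pow, psi3val, psi7]
    linear_combination hω3
  exact noConsec 20 21 (by norm_num) nz20 nz21 cb20 cb21

private lemma decide7 : ∀ x y : ZMod 7, x ≠ 0 → y ≠ 0 → y ^ 3 ≠ x ^ 3 + 1 := by decide

private lemma decide13 : ∀ x y : ZMod 13, x ≠ 0 → y ≠ 0 → y ^ 3 ≠ x ^ 3 + 1 := by decide

end Aux

/-- The only odd primes admitting no two nonzero consecutive cubic residues
are 7 and 13. -/
theorem no_consecutive_cubic_residues_iff
    (θ : ℕ) (hθ : θ.Prime) (hodd : Odd θ) :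
    (¬ ∃ a b : ℤ, ¬ (θ : ℤ) ∣ a ∧ ¬ (θ : ℤ) ∣ b ∧ b ^ 3 ≡ a ^ 3 + 1 [ZMOD (θ : ℤ)]) ↔
      θ = 7 ∨ θ = 13 := by
  haveI : Fact θ.Prime := ⟨hθ⟩
  have hne2 : θ ≠ 2 := by rintro rfl; exact (by decide : ¬ Odd 2) hodd
  -- bridge between the integer statement and the `ZMod θ` statement
  have bridge : (∃ a b : ℤ, ¬ (θ : ℤ) ∣ a ∧ ¬ (θ : ℤ) ∣ b ∧
      b ^ 3 ≡ a ^ 3 + 1 [ZMOD (θ : ℤ)]) ↔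
      ∃ x y : ZMod θ, x ≠ 0 ∧ y ≠ 0 ∧ y ^ 3 = x ^ 3 + 1 := by
    constructor
    · rintro ⟨a, b, ha, hb, hab⟩
      refine ⟨(a : ZMod θ), (b : ZMod θ), ?_, ?_, ?_⟩
      · intro h; exact ha ((ZMod.intCast_zmod_eq_zero_iff_dvd a θ).mp h)
      · intro h; exact hb ((ZMod.intCast_zmod_eq_zero_iff_dvd b θ).mp h)
      · have := (ZMod.intCast_eq_intCast_iff (b ^ 3) (a ^ 3 + 1) θ).mpr hab
        push_cast at this
        exact this
    · rintro ⟨x, y, hx, hy, hxy⟩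
      refine ⟨(x.val : ℤ), (y.val : ℤ), ?_, ?_, ?_⟩
      · intro h
        rw [← ZMod.intCast_zmod_eq_zero_iff_dvd] at h
        push_cast at h
        rw [ZMod.natCast_rightInverse x] at h
        exact hx h
      · intro h
        rw [← ZMod.intCast_zmod_eq_zero_iff_dvd] at h
        push_cast at h
        rw [ZMod.natCast_rightInverse y] at h
        exact hy h
      · rw [← ZMod.intCast_eq_intCast_iff]
        push_cast
        rw [ZMod.natCast_rightInverse x, ZMod.natCast_rightInverse y]
        exact hxy
  rw [bridge]
  constructor
  · intro H
    by_contra hne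
    push_neg at hne
    obtain ⟨h7, h13⟩ := hne
    by_cases h3 : θ % 3 = 1
    · refine case_one_mod_three hθ hodd h3 h7 h13 ?_
      rintro x hx hx1 ⟨a, ha⟩ ⟨b, hb⟩
      refine H ⟨a, b, ?_, ?_, ?_⟩
      · rintro rfl; rw [show (0 : ZMod θ) ^ 3 = 0 by norm_num] at ha
        exact hx ha.symm
      · rintro rfl; rw [show (0 : ZMod θ) ^ 3 = 0 by norm_num] at hb
        exact hx1 hb.symm
      · rw [ha, hb]
    · -- cubing is surjective mod θ here
      have h2nz : (2 : ZMod θ) ≠ 0 := by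
        intro h
        have := (ZMod.natCast_eq_zero_iff 2 θ).mp (by exact_mod_cast h)
        exact hne2 ((Nat.prime_dvd_prime_iff_eq hθ (by norm_num)).mp this)
      have hcop : (Nat.card (ZMod θ)ˣ).Coprime 3 := by
        rw [Nat.card_eq_fintype_card, ZMod.card_units, Nat.coprime_comm]
        have h2 : 2 ≤ θ := hθ.two_le
        exact (Nat.Prime.coprime_iff_not_dvd (by norm_num)).mpr (by omega)
      obtain ⟨u, hu⟩ := (powCoprime hcop).surjective (Units.mk0 (2 : ZMod θ) h2nz)
      rw [powCoprime_apply] at hu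
      have hu3 : (u : ZMod θ) ^ 3 = 2 := by
        have := congrArg Units.val hu
        push_cast at this
        simpa using this
      exact H ⟨1, (u : ZMod θ), one_ne_zero, u.ne_zero, by rw [hu3]; norm_num⟩
  · rintro (rfl | rfl)
    · rintro ⟨x, y, hx, hy, hxy⟩
      exact decide7 x y hx hy hxy
    · rintro ⟨x, y, hx, hy, hxy⟩
      exact decide13 x y hx hy hxy
end

section
/- Let p be an odd prime and x, y coprime integers. If a prime q divides both x + y and φ(x, y) = Σ_{i=0}^{p−1} (−1)^i x^{p−1−i} y^i, then q = p; that is, x + y and φ(x, y) can have no common prime divisor other than p. -/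
/-- For coprime x, y and odd prime p, the numbers x + y and
φ(x, y) = Σ_{i<p} (−1)^i x^(p−1−i) y^i can have no common prime divisor
other than p. -/
theorem common_divisor_is_p
    (p : ℕ) (hp : p.Prime) (hpodd : Odd p)
    (x y : ℤ) (hxy : IsCoprime x y)
    (q : ℕ) (hq : q.Prime)
    (hq1 : (q : ℤ) ∣ x + y)
    (hq2 : (q : ℤ) ∣ ∑ i ∈ Finset.range p, (-1) ^ i * x ^ (p - 1 - i) * y ^ i) :
    q = p := by
  haveI : Fact q.Prime := ⟨hq⟩
  have h1 : ((x : ZMod q) + y) = 0 := by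
    have := (ZMod.intCast_zmod_eq_zero_iff_dvd (x + y) q).mpr hq1
    push_cast at this
    exact this
  have hy : (y : ZMod q) = -(x : ZMod q) := by
    rw [eq_neg_iff_add_eq_zero, add_comm]; exact h1
  have h2 : ((∑ i ∈ Finset.range p, (-1) ^ i * x ^ (p - 1 - i) * y ^ i : ℤ) : ZMod q) = 0 :=
    (ZMod.intCast_zmod_eq_zero_iff_dvd _ q).mpr hq2
  push_cast at h2
  rw [hy] at h2
  have h3 : (p : ZMod q) * (x : ZMod q) ^ (p - 1) = 0 := by
    rw [← h2]
    rw [Finset.sum_congr rfl (fun i hi => ?_)]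
    · rw [Finset.sum_const, Finset.card_range, nsmul_eq_mul]
    · have hi' : i ≤ p - 1 := Nat.le_sub_one_of_lt (Finset.mem_range.mp hi)
      rw [neg_pow (x : ZMod q) i]
      ring_nf
      have hpe : i + (p - 1 - i) = p - 1 := by omega
      rw [← pow_add, hpe, mul_comm i 2, pow_mul, neg_one_sq, one_pow, mul_one]
  rcases mul_eq_zero.mp h3 with h | h
  · have : q ∣ p := (ZMod.natCast_eq_zero_iff p q).mp h
    exact (Nat.prime_dvd_prime_iff_eq hq hp).mp this
  · exfalso
    have hx0 : (x : ZMod q) = 0 := pow_eq_zero_iff (by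
      have := hp.two_le; omega : p - 1 ≠ 0) |>.mp h
    have hy0 : (y : ZMod q) = 0 := by rw [hy, hx0, neg_zero]
    have hdx : (q : ℤ) ∣ x := (ZMod.intCast_zmod_eq_zero_iff_dvd x q).mp hx0
    have hdy : (q : ℤ) ∣ y := (ZMod.intCast_zmod_eq_zero_iff_dvd y q).mp hy0
    obtain ⟨a, b, hab⟩ := hxy
    have : (q : ℤ) ∣ 1 := by
      rw [← hab]; exact dvd_add (Dvd.dvd.mul_left hdx a) (Dvd.dvd.mul_left hdy b)
    have := Int.eq_one_of_dvd_one (by positivity) this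
    have hq2 := hq.two_le
    omega
end

section
/- Let p be an odd prime and x, y, z pairwise coprime nonzero integers with x^p + y^p = z^p and p not dividing z. Then there exist integers l and r with x + y = l^p and φ(x, y) = r^p, where φ(x, y) = Σ_{i=0}^{p−1} (−1)^i x^{p−1−i} y^i. (The Barlow–Abel equations.) -/
/-!
Writing `φ(x, y) = ∑ (-y)^i x^(p-1-i)` as a two-variable geometric sum gives
`(x + y) φ(x, y) = x^p + y^p = z^p`. Modulo `x + y` we have `y ≡ -x`, so `φ(x, y) ≡ p x^(p-1)`;
as `x + y` is coprime to `x` and (because `p ∤ z`) to `p`, it is coprime to `φ(x, y)`.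
Two coprime integers whose product is an odd power are themselves such powers.
-/

open Finset

/-- The paper's `φ(x, y)`, for an arbitrary exponent `n` in place of `p`. -/
def altGeomSum₂ {R : Type*} [CommRing R] (x y : R) (n : ℕ) : R :=
  ∑ i ∈ range n, (-1) ^ i * x ^ (n - 1 - i) * y ^ i

section

variable {R : Type*} [CommRing R] (x y : R) (n : ℕ)

theorem altGeomSum₂_eq_geom_sum₂ :
    altGeomSum₂ x y n = ∑ i ∈ range n, (-y) ^ i * x ^ (n - 1 - i) :=
  sum_congr rfl fun i _ => by rw [neg_pow]; ring

theorem add_mul_altGeomSum₂ (hn : Odd n) : (x + y) * altGeomSum₂ x y n = x ^ n + y ^ n := by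
  have h := geom_sum₂_mul (-y) x n
  rw [← altGeomSum₂_eq_geom_sum₂, hn.neg_pow] at h
  linear_combination -h

theorem add_dvd_altGeomSum₂_sub : x + y ∣ altGeomSum₂ x y n - n * x ^ (n - 1) := by
  rw [altGeomSum₂_eq_geom_sum₂, ← geom_sum₂_self, ← sum_sub_distrib]
  refine dvd_sum fun i _ => ?_
  rw [← sub_mul]
  have h := sub_dvd_pow_sub_pow (-y) x i
  rw [show -y - x = -(x + y) by ring, neg_dvd] at h
  exact h.mul_right _

variable {x y n}

theorem IsCoprime.add_altGeomSum₂ (hxy : IsCoprime x y) (hn : IsCoprime (x + y) n) :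
    IsCoprime (x + y) (altGeomSum₂ x y n) := by
  have hx : IsCoprime (x + y) x := by simpa [add_comm] using hxy.symm.add_mul_left_left 1
  obtain ⟨k, hk⟩ := add_dvd_altGeomSum₂_sub x y n
  rw [sub_eq_iff_eq_add'] at hk
  rw [hk]
  exact IsCoprime.add_mul_left_right_iff.mpr (hn.mul_right hx.pow_right)

end

theorem barlow_abel_general
    (p : ℕ) (hp : p.Prime) (hpodd : Odd p)
    (x y z : ℤ)
    (hxy : IsCoprime x y)
    (hfermat : x ^ p + y ^ p = z ^ p) (hpz : ¬ (p : ℤ) ∣ z) :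
    ∃ l r : ℤ, x + y = l ^ p ∧
      (∑ i ∈ Finset.range p, (-1) ^ i * x ^ (p - 1 - i) * y ^ i) = r ^ p := by
  have hprod : (x + y) * altGeomSum₂ x y p = z ^ p := by
    rw [add_mul_altGeomSum₂ x y p hpodd, hfermat]
  have hp' : Prime (p : ℤ) := Nat.prime_iff_prime_int.mp hp
  have hp_ndvd : ¬ (p : ℤ) ∣ x + y := fun h => hpz (hp'.dvd_of_dvd_pow (hprod ▸ h.mul_right _))
  have hcop := hxy.add_altGeomSum₂ (hp'.coprime_iff_not_dvd.mpr hp_ndvd).symm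
  obtain ⟨l, hl⟩ := Int.eq_pow_of_mul_eq_pow_odd_left hcop hpodd hprod
  obtain ⟨r, hr⟩ := Int.eq_pow_of_mul_eq_pow_odd_right hcop hpodd hprod
  exact ⟨l, r, hl, hr⟩

/-- The Barlow–Abel equations: if x, y, z are pairwise coprime nonzero
integers with x^p + y^p = z^p and p ∤ z, then x + y and φ(x, y) are both
p-th powers. -/
theorem barlow_abel
    (p : ℕ) (hp : p.Prime) (hpodd : Odd p)
    (x y z : ℤ) (hx : x ≠ 0) (hy : y ≠ 0) (hz : z ≠ 0)
    (hxy : IsCoprime x y) (hyz : IsCoprime y z) (hxz : IsCoprime x z)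
    (hfermat : x ^ p + y ^ p = z ^ p) (hpz : ¬ (p : ℤ) ∣ z) :
    ∃ l r : ℤ, x + y = l ^ p ∧
      (∑ i ∈ Finset.range p, (-1) ^ i * x ^ (p - 1 - i) * y ^ i) = r ^ p :=
  barlow_abel_general p hp hpodd x y z hxy hfermat hpz
end

section
/- Let p be an odd prime and x, y integers with p dividing x + y and p not dividing x. Then φ(x, y) ≡ p·x^{p−1} (mod p^2), where φ(x, y) = Σ_{i=0}^{p−1} (−1)^i x^{p−1−i} y^i; in particular φ(x, y) is divisible by p but not by p^2. -/
private lemma pow_cong_aux (p : ℕ) (x t y : ℤ) (hy : y = (p : ℤ) * t - x) :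
    ∀ i : ℕ,
      y ^ i ≡ (-x) ^ i + i * (-x) ^ (i - 1) * ((p : ℤ) * t) [ZMOD (p : ℤ) ^ 2] := by
  intro i
  induction i with
  | zero => simp
  | succ n ih =>
    have h1 : y ^ (n + 1) = y * y ^ n := by ring
    have h2 : y * y ^ n ≡ y * ((-x) ^ n + n * (-x) ^ (n - 1) * ((p : ℤ) * t))
        [ZMOD (p : ℤ) ^ 2] := ih.mul_left y
    refine (h1 ▸ h2).trans ?_
    rw [hy]
    cases n with
    | zero =>
      exact Int.modEq_iff_dvd.mpr ⟨0, by push_cast; ring⟩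
    | succ m =>
      apply Int.modEq_iff_dvd.mpr
      refine ⟨-((m + 1 : ℤ) * (-x) ^ m * t ^ 2), ?_⟩
      push_cast
      ring

private lemma term_eq_aux (p i : ℕ) (hi : i < p) (hp2 : 2 ≤ p) (x c : ℤ) :
    (-1) ^ i * x ^ (p - 1 - i) * ((-x) ^ i + i * (-x) ^ (i - 1) * c) =
      x ^ (p - 1) - i * x ^ (p - 2) * c := by
  cases i with
  | zero => simp
  | succ j =>
    have h1 : p - 1 - (j + 1) + (j + 1) = p - 1 := by omega
    have h2 : p - 1 - (j + 1) + j = p - 2 := by omega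
    have A : ((-1 : ℤ) ^ (j + 1)) * ((-1 : ℤ) ^ (j + 1)) = 1 := by
      rw [← pow_add]; exact Even.neg_one_pow ⟨j + 1, by ring⟩
    have B : ((-1 : ℤ) ^ (j + 1)) * ((-1 : ℤ) ^ j) = -1 := by
      rw [← pow_add]; exact Odd.neg_one_pow ⟨j, by ring⟩
    simp only [Nat.add_sub_cancel]
    obtain ⟨a, ha0, ha1, ha2⟩ : ∃ a, p - 1 - (j + 1) = a ∧ p - 1 = a + (j + 1) ∧
        p - 2 = a + j := ⟨p - 1 - (j + 1), rfl, by omega, by omega⟩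
    rw [neg_pow x (j + 1), neg_pow x j, ha0, ha1, ha2, pow_add, pow_add]
    push_cast
    linear_combination (x ^ a * x ^ (j + 1)) * A + ((j + 1 : ℤ) * x ^ a * x ^ j * c) * B

/-- If p divides x + y but not x, then φ(x, y) ≡ p·x^(p−1) (mod p²); in
particular φ(x, y) is divisible by p but not by p². -/
theorem phi_mod_p_squared
    (p : ℕ) (hp : p.Prime) (hpodd : Odd p)
    (x y : ℤ) (hxy : (p : ℤ) ∣ x + y) (hx : ¬ (p : ℤ) ∣ x) :
    (∑ i ∈ Finset.range p, (-1) ^ i * x ^ (p - 1 - i) * y ^ i) ≡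
        (p : ℤ) * x ^ (p - 1) [ZMOD (p : ℤ) ^ 2] ∧
      (p : ℤ) ∣ (∑ i ∈ Finset.range p, (-1) ^ i * x ^ (p - 1 - i) * y ^ i) ∧
      ¬ (p : ℤ) ^ 2 ∣ (∑ i ∈ Finset.range p, (-1) ^ i * x ^ (p - 1 - i) * y ^ i) := by
  obtain ⟨k, hk⟩ := hxy
  have hy : y = (p : ℤ) * k - x := by linarith
  have hp2 : 2 ≤ p := hp.two_le
  obtain ⟨m, hm⟩ := hpodd
  -- termwise congruence
  have key : ∀ i ∈ Finset.range p,
      (-1 : ℤ) ^ i * x ^ (p - 1 - i) * y ^ i ≡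
        x ^ (p - 1) - i * x ^ (p - 2) * ((p : ℤ) * k) [ZMOD (p : ℤ) ^ 2] := by
    intro i hi
    have h := (pow_cong_aux p x k y hy i).mul_left ((-1 : ℤ) ^ i * x ^ (p - 1 - i))
    rw [mul_assoc] at h
    calc (-1 : ℤ) ^ i * x ^ (p - 1 - i) * y ^ i
        ≡ (-1 : ℤ) ^ i * x ^ (p - 1 - i) *
            ((-x) ^ i + i * (-x) ^ (i - 1) * ((p : ℤ) * k)) [ZMOD (p : ℤ) ^ 2] := by
          rw [mul_assoc]; exact h
      _ = x ^ (p - 1) - i * x ^ (p - 2) * ((p : ℤ) * k) :=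
          term_eq_aux p i (Finset.mem_range.mp hi) hp2 x ((p : ℤ) * k)
  have h1 : (∑ i ∈ Finset.range p, (-1 : ℤ) ^ i * x ^ (p - 1 - i) * y ^ i) ≡
      (∑ i ∈ Finset.range p, (x ^ (p - 1) - (i : ℤ) * x ^ (p - 2) * ((p : ℤ) * k)))
        [ZMOD (p : ℤ) ^ 2] := by
    apply Int.modEq_iff_dvd.mpr
    rw [← Finset.sum_sub_distrib]
    exact Finset.dvd_sum fun i hi => Int.ModEq.dvd (key i hi)
  -- Gauss sum
  have hgauss : (∑ i ∈ Finset.range p, i) = m * p := by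
    have hg := Finset.sum_range_id_mul_two p
    have : (m * p) * 2 = p * (p - 1) := by rw [hm, Nat.add_sub_cancel]; ring
    omega
  have hs : (∑ i ∈ Finset.range p, (x ^ (p - 1) - (i : ℤ) * x ^ (p - 2) * ((p : ℤ) * k)))
      = (p : ℤ) * x ^ (p - 1) - (m * p : ℤ) * x ^ (p - 2) * ((p : ℤ) * k) := by
    rw [Finset.sum_sub_distrib, Finset.sum_const, Finset.card_range, ← Finset.sum_mul,
      ← Finset.sum_mul]
    rw [show (∑ i ∈ Finset.range p, (i : ℤ)) = ((∑ i ∈ Finset.range p, i : ℕ) : ℤ) by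
      push_cast; ring, hgauss]
    push_cast
    ring
  have h2 : (∑ i ∈ Finset.range p, (x ^ (p - 1) - (i : ℤ) * x ^ (p - 2) * ((p : ℤ) * k)))
      ≡ (p : ℤ) * x ^ (p - 1) [ZMOD (p : ℤ) ^ 2] := by
    apply Int.modEq_iff_dvd.mpr
    exact ⟨m * x ^ (p - 2) * k, by rw [hs]; push_cast; ring⟩
  have H := h1.trans h2
  refine ⟨H, ?_, ?_⟩
  · obtain ⟨c, hc⟩ := Int.ModEq.dvd H
    exact ⟨x ^ (p - 1) - p * c, by linear_combination -hc⟩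
  · intro hdvd
    obtain ⟨c, hc⟩ := Int.ModEq.dvd H
    obtain ⟨d, hd⟩ := hdvd
    have hpx : (p : ℤ) * x ^ (p - 1) = (p : ℤ) ^ 2 * (d + c) := by linear_combination hd + hc
    have hpne : (p : ℤ) ≠ 0 := by exact_mod_cast hp.ne_zero
    have : x ^ (p - 1) = (p : ℤ) * (d + c) := by
      apply mul_left_cancel₀ hpne
      rw [hpx]; ring
    have hdx : (p : ℤ) ∣ x ^ (p - 1) := ⟨d + c, this⟩
    exact hx ((Nat.prime_iff_prime_int.mp hp).dvd_of_dvd_pow hdx)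
end

section
/- Let p be a prime with p ≡ 3 (mod 4), and let x, y, z be integers with gcd(x, y) = 1 and x^{2p} + y^{2p} = z^{2p}. Then p does not divide z. (The valid part of Theorem 3 of Germain's Manuscript B: for prime exponents p = 8n + 3 or 8n + 7, the Fermat equation for exponent 2p has no solution with z divisible by p.) -/
/-- For a prime p ≡ 3 (mod 4) and coprime x, y with x^(2p) + y^(2p) = z^(2p),
the number z is not divisible by p. -/
theorem z_not_divisible_by_p
    (p : ℕ) (hp : p.Prime) (hmod : p % 4 = 3)
    (x y z : ℤ) (hxy : IsCoprime x y)
    (hfermat : x ^ (2 * p) + y ^ (2 * p) = z ^ (2 * p)) :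
    ¬ (p : ℤ) ∣ z := by
  haveI : Fact p.Prime := ⟨hp⟩
  intro hdvd
  -- reduce mod p
  have hz : ((z : ZMod p)) = 0 := by
    have := (ZMod.intCast_zmod_eq_zero_iff_dvd z p).2 hdvd
    exact_mod_cast this
  have key : ((x : ZMod p))^2 + ((y : ZMod p))^2 = 0 := by
    have h := congrArg (fun t : ℤ => (t : ZMod p)) hfermat
    push_cast at h
    rw [hz] at h
    have hx2 : ((x : ZMod p)) ^ (2 * p) = ((x : ZMod p))^2 := by
      rw [mul_comm, pow_mul, ZMod.pow_card]
    have hy2 : ((y : ZMod p)) ^ (2 * p) = ((y : ZMod p))^2 := by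
      rw [mul_comm, pow_mul, ZMod.pow_card]
    rw [hx2, hy2] at h
    rw [zero_pow (by have := hp.pos; positivity)] at h; exact h
  -- p ≡ 3 mod 4 ⇒ -1 not a square mod p ⇒ x ≡ y ≡ 0 mod p
  have hnsq : ¬ IsSquare (-1 : ZMod p) := by
    rw [ZMod.exists_sq_eq_neg_one_iff]
    simp [hmod]
  have hy0 : ((y : ZMod p)) = 0 := by
    by_contra hy0
    apply hnsq
    refine ⟨(x : ZMod p) * ((y : ZMod p))⁻¹, ?_⟩
    have hyinv : ((y : ZMod p)) * ((y : ZMod p))⁻¹ = 1 := ZMod.mul_inv_of_unit _ (Ne.isUnit hy0)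
    have hx2 : ((x : ZMod p))^2 = -((y : ZMod p))^2 := by linear_combination key
    field_simp
    linear_combination (-1 : ZMod p) * hx2
  have hx0 : ((x : ZMod p)) = 0 := by
    have : ((x : ZMod p))^2 = 0 := by rw [hy0] at key; simpa using key
    exact pow_eq_zero_iff (n := 2) (by norm_num) |>.mp this
  have hdx : (p : ℤ) ∣ x := (ZMod.intCast_zmod_eq_zero_iff_dvd x p).1 (by exact_mod_cast hx0)
  have hdy : (p : ℤ) ∣ y := (ZMod.intCast_zmod_eq_zero_iff_dvd y p).1 (by exact_mod_cast hy0)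
  have : IsUnit (p : ℤ) := hxy.isUnit_of_dvd' hdx hdy
  rw [Int.isUnit_iff] at this
  have hp2 := hp.two_le
  omega
end

section
/- Let p be an odd prime and x, y, z pairwise coprime nonzero integers with x^p + y^p = z^p. Let θ be a prime satisfying Condition N-C for p, Condition p-N-p for p, and Condition N-p⁻¹ for p. Then one of the three numbers x + y, z − y, z − x is divisible by p^{2p−1}·θ^p. (Germain's Large Size of Solutions theorem, corrected with the additional hypothesis from her erratum.) -/
/-!
Reducing the equation modulo θ, Condition N-C forces θ to divide one of x, y, z, and the
symmetries `(x, y, z) ↦ (y, x, z)` and `(x, y, z) ↦ (z, -y, x)` (p is odd) let us assume θ ∣ z.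
Write `(z - y) * Q(z, y) = x ^ p` with `Q(z, y) = geomSum₂ p z y = ∑ z ^ i * y ^ (p - 1 - i)`:
the two factors are coprime when `p ∤ x`, and when `p ∣ x` we have `Q = p * Q₁` with
`p * (z - y)` coprime to `Q₁`. Hence each of `x + y`, `z - y`, `z - x` is a p-th power or p⁻¹
times one, and modulo θ these are `x + y`, `-y`, `-x`. Condition N-C (if `p ∤ xyz`) or N-p⁻¹
(if `p ∣ xyz`) then gives `θ ∣ x + y`. Now `Q(x, -y) ≡ p * x ^ (p - 1)` and
`Q(z, x) ≡ x ^ (p - 1)` modulo θ would both be p-th powers if `p ∤ yz`, against Condition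
p-N-p; so `p ∣ z` (exchange x and y if `p ∣ y`). Since θ ∤ `Q(x, -y)`, `θ ^ p ∣ x + y`.
Finally `p ∣ z` gives `p ^ 2 ∣ z`, and then `p ^ (2 * p) ∣ p * (x + y)` because `p * (x + y)` is
a p-th power whose p-adic valuation is that of `z ^ p`.
-/

open Finset

def geomSum₂ {R : Type*} [CommRing R] (n : ℕ) (x y : R) : R :=
  ∑ i ∈ range n, x ^ i * y ^ (n - 1 - i)

section geomSum₂

variable {R : Type*} [CommRing R] (n : ℕ) (x y : R)

lemma sub_mul_geomSum₂ : (x - y) * geomSum₂ n x y = x ^ n - y ^ n := by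
  rw [mul_comm]
  exact geom_sum₂_mul x y n

lemma geomSum₂_self : geomSum₂ n x x = n * x ^ (n - 1) :=
  geom_sum₂_self x n

lemma geomSum₂_neg_of_add_eq_zero {x y : R} (h : x + y = 0) :
    geomSum₂ n x (-y) = n * x ^ (n - 1) := by
  rw [neg_eq_of_add_eq_zero_left h, geomSum₂_self]

lemma geomSum₂_zero_left (hn : n ≠ 0) : geomSum₂ n 0 y = y ^ (n - 1) := by
  rw [geomSum₂, sum_eq_single_of_mem 0 (mem_range.mpr (Nat.pos_of_ne_zero hn))]
  · simp
  · intro i _ hi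
    simp [zero_pow hi]

@[push_cast]
lemma Int.cast_geomSum₂ (a b : ℤ) : ((geomSum₂ n a b : ℤ) : R) = geomSum₂ n (a : R) b := by
  simp [geomSum₂]

lemma sub_dvd_geomSum₂_sub : x - y ∣ geomSum₂ n x y - n * y ^ (n - 1) := by
  rw [← Ideal.mem_span_singleton, ← Ideal.Quotient.eq]
  have hxy : Ideal.Quotient.mk (Ideal.span {x - y}) x = Ideal.Quotient.mk _ y :=
    Ideal.Quotient.eq.mpr (Ideal.mem_span_singleton_self _)
  simp [geomSum₂, hxy, geom_sum₂_self]

end geomSum₂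

lemma Prime.not_dvd_of_isCoprime {R : Type*} [CommSemiring R] {q a b : R} (hq : Prime q)
    (hab : IsCoprime a b) (hb : q ∣ b) : ¬ q ∣ a :=
  fun ha => hq.not_isUnit (hab.isUnit_of_dvd' ha hb)

section Factorization

variable {p : ℕ} {x y z : ℤ}

lemma sub_mul_geomSum₂_eq_pow (h : x ^ p + y ^ p = z ^ p) :
    (z - y) * geomSum₂ p z y = x ^ p := by
  rw [sub_mul_geomSum₂, ← h]
  ring

lemma sub_modEq_of_add_pow_eq (hp : p.Prime) (h : x ^ p + y ^ p = z ^ p) :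
    z - y ≡ x [ZMOD p] :=
  calc z - y ≡ z ^ p - y ^ p [ZMOD p] :=
        ((Int.ModEq.pow_prime_eq_self hp z).sub (Int.ModEq.pow_prime_eq_self hp y)).symm
    _ = x ^ p := by rw [← h]; ring
    _ ≡ x [ZMOD p] := Int.ModEq.pow_prime_eq_self hp x

lemma IsCoprime.sub_self_right (hyz : IsCoprime y z) : IsCoprime y (z - y) := by
  simpa using (IsCoprime.sub_mul_right_right_iff (z := 1)).mpr hyz

lemma isCoprime_sub_geomSum₂ (hp : p.Prime) (hyz : IsCoprime y z) (h : ¬ (p : ℤ) ∣ z - y) :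
    IsCoprime (z - y) (geomSum₂ p z y) := by
  obtain ⟨k, hk⟩ := sub_dvd_geomSum₂_sub p z y
  have hp' : IsCoprime (z - y) p :=
    ((Nat.prime_iff_prime_int.mp hp).coprime_iff_not_dvd.mpr h).symm
  rw [sub_eq_iff_eq_add'.mp hk]
  exact (hp'.mul_right hyz.sub_self_right.symm.pow_right).add_mul_left_right k

lemma exists_pow_eq_sub_of_not_dvd (hp : p.Prime) (hpodd : Odd p) (hyz : IsCoprime y z)
    (h : x ^ p + y ^ p = z ^ p) (hpx : ¬ (p : ℤ) ∣ x) :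
    (∃ s, z - y = s ^ p) ∧ ∃ σ, geomSum₂ p z y = σ ^ p := by
  have hpzy : ¬ (p : ℤ) ∣ z - y := (sub_modEq_of_add_pow_eq hp h).dvd_iff.not.mpr hpx
  have hcop := isCoprime_sub_geomSum₂ hp hyz hpzy
  have he := sub_mul_geomSum₂_eq_pow h
  exact ⟨Int.eq_pow_of_mul_eq_pow_odd_left hcop hpodd he,
    Int.eq_pow_of_mul_eq_pow_odd_right hcop hpodd he⟩

lemma exists_geomSum₂_eq_prime_mul (hpodd : Odd p) (hp0 : p ≠ 0) (hyz : IsCoprime y z)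
    (h : (p : ℤ) ∣ z - y) : ∃ g, geomSum₂ p z y = p * g ∧ IsCoprime (p * (z - y)) g := by
  obtain ⟨m, hm⟩ := h
  obtain ⟨k, hk⟩ : (p : ℤ) ^ 2 ∣ geomSum₂ p z y - p * y ^ (p - 1) := by
    simpa [geomSum₂, ← hm] using odd_sq_dvd_geom_sum₂_sub y m hpodd (R := ℤ)
  obtain ⟨j, hj⟩ := sub_dvd_geomSum₂_sub p z y
  have hmj : p * k = m * j := by
    have h2 : (p : ℤ) * (p * k) = p * (m * j) := by linear_combination hk.symm.trans (hm ▸ hj)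
    exact mul_left_cancel₀ (by exact_mod_cast hp0) h2
  have hyzy : IsCoprime y (p * m) := hm ▸ hyz.sub_self_right
  have hpg : IsCoprime (p : ℤ) (y ^ (p - 1) + p * k) :=
    hyzy.of_mul_right_left.symm.pow_right.add_mul_left_right k
  have hmg : IsCoprime m (y ^ (p - 1) + p * k) := by
    rw [hmj]
    exact hyzy.of_mul_right_right.symm.pow_right.add_mul_left_right j
  exact ⟨_, by linear_combination hk, hm ▸ hpg.mul_left (hpg.mul_left hmg)⟩

lemma exists_pow_eq_prime_mul_sub_of_dvd (hp : p.Prime) (hpodd : Odd p) (hyz : IsCoprime y z)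
    (h : x ^ p + y ^ p = z ^ p) (hpx : (p : ℤ) ∣ x) :
    ∃ w, w ^ p = p * (z - y) ∧ ∀ k, (p : ℤ) ^ k ∣ x → (p : ℤ) ^ (p * k - 1) ∣ z - y := by
  have hpzy : (p : ℤ) ∣ z - y := (sub_modEq_of_add_pow_eq hp h).dvd_iff.mpr hpx
  obtain ⟨g, hg, hcop⟩ := exists_geomSum₂_eq_prime_mul hpodd hp.ne_zero hyz hpzy
  have he : p * (z - y) * g = x ^ p := by
    rw [← sub_mul_geomSum₂_eq_pow h, hg]
    ring
  obtain ⟨w, hw⟩ := Int.eq_pow_of_mul_eq_pow_odd_left hcop hpodd he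
  refine ⟨w, hw.symm, fun k hk => ?_⟩
  obtain _ | k := k
  · simp
  have hdvd : (p : ℤ) ^ (p * (k + 1)) ∣ p * (z - y) := by
    refine hcop.of_mul_left_left.pow_left.dvd_of_dvd_mul_right ?_
    rw [he, pow_mul']
    exact pow_dvd_pow_of_dvd hk p
  rwa [← Nat.sub_add_cancel (Nat.one_le_iff_ne_zero.mpr (mul_ne_zero hp.ne_zero k.succ_ne_zero)),
    pow_succ', mul_dvd_mul_iff_left (by exact_mod_cast hp.ne_zero)] at hdvd

end Factorization

structure IsFermatTriple (p : ℕ) (x y z : ℤ) : Prop where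
  isCoprime_xy : IsCoprime x y
  isCoprime_yz : IsCoprime y z
  isCoprime_xz : IsCoprime x z
  add_pow_eq : x ^ p + y ^ p = z ^ p

namespace IsFermatTriple

variable {p : ℕ} {x y z : ℤ}

lemma swap (T : IsFermatTriple p x y z) : IsFermatTriple p y x z :=
  ⟨T.isCoprime_xy.symm, T.isCoprime_xz, T.isCoprime_yz, by rw [add_comm]; exact T.add_pow_eq⟩

lemma rotate (hpodd : Odd p) (T : IsFermatTriple p x y z) : IsFermatTriple p z (-y) x :=
  ⟨T.isCoprime_yz.symm.neg_right, T.isCoprime_xy.symm.neg_left, T.isCoprime_xz.symm,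
    by rw [hpodd.neg_pow, ← T.add_pow_eq]; ring⟩

lemma prime_pow_dvd_add (T : IsFermatTriple p x y z) (hp : p.Prime) (hpodd : Odd p)
    (hpz : (p : ℤ) ∣ z) : (p : ℤ) ^ (2 * p - 1) ∣ x + y := by
  have hpZ := Nat.prime_iff_prime_int.mp hp
  have hp3 : 3 ≤ p := by
    obtain ⟨k, rfl⟩ := hpodd
    have := hp.two_le
    omega
  have R := T.rotate hpodd
  obtain ⟨-, -, hdvd⟩ :=
    exists_pow_eq_prime_mul_sub_of_dvd hp hpodd R.isCoprime_yz R.add_pow_eq hpz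
  simp only [sub_neg_eq_add] at hdvd
  obtain ⟨⟨s, hs⟩, -⟩ := exists_pow_eq_sub_of_not_dvd hp hpodd T.isCoprime_yz T.add_pow_eq
    (hpZ.not_dvd_of_isCoprime T.isCoprime_xz hpz)
  obtain ⟨⟨t, ht⟩, -⟩ :=
    exists_pow_eq_sub_of_not_dvd hp hpodd T.swap.isCoprime_yz T.swap.add_pow_eq
      (hpZ.not_dvd_of_isCoprime T.isCoprime_yz hpz)
  have hp2 : (p : ℤ) ^ 2 ∣ x + y :=
    (pow_dvd_pow _ (by omega)).trans (hdvd 1 (by simpa using hpz))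
  -- `s + t ≡ s ^ p + t ^ p = 2 z - (x + y)` is divisible by `p`, hence `s ^ p + t ^ p` by `p ^ 2`.
  have hst : (p : ℤ) ∣ s - -t := by
    rw [sub_neg_eq_add, ((Int.ModEq.pow_prime_eq_self hp s).add
      (Int.ModEq.pow_prime_eq_self hp t)).symm.dvd_iff, ← hs, ← ht,
      show z - y + (z - x) = 2 * z - (x + y) by ring]
    exact (dvd_mul_of_dvd_right hpz 2).sub ((dvd_pow_self _ two_ne_zero).trans hp2)
  have hst2 : (p : ℤ) ^ 2 ∣ s ^ p + t ^ p := by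
    simpa [hpodd.neg_pow] using dvd_sub_pow_of_dvd_sub hst 1
  have h2z : (p : ℤ) ^ 2 ∣ 2 * z := by
    have := dvd_add hst2 hp2
    rwa [← hs, ← ht, show z - y + (z - x) + (x + y) = 2 * z by ring] at this
  have h2 : IsCoprime ((p : ℤ) ^ 2) 2 :=
    (hpZ.coprime_iff_not_dvd.mpr fun h => by have := Int.le_of_dvd two_pos h; omega).pow_left
  simpa [mul_comm] using hdvd 2 (h2.dvd_of_dvd_mul_left h2z)

section Residues

variable {θ : ℕ} [Fact θ.Prime]

lemma cast_add_eq_zero_of_not_dvd (T : IsFermatTriple p x y z) (hp : p.Prime) (hpodd : Odd p)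
    (hNC : ∀ u v w : ZMod θ, u ^ p + v ^ p = w ^ p → u = 0 ∨ v = 0 ∨ w = 0)
    (hz : (z : ZMod θ) = 0) (hx : (x : ZMod θ) ≠ 0) (hy : (y : ZMod θ) ≠ 0)
    (hpx : ¬ (p : ℤ) ∣ x) (hpy : ¬ (p : ℤ) ∣ y) (hpz : ¬ (p : ℤ) ∣ z) :
    (x : ZMod θ) + y = 0 := by
  have R := T.rotate hpodd
  obtain ⟨⟨r, hr⟩, -⟩ := exists_pow_eq_sub_of_not_dvd hp hpodd R.isCoprime_yz R.add_pow_eq hpz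
  obtain ⟨⟨s, hs⟩, -⟩ := exists_pow_eq_sub_of_not_dvd hp hpodd T.isCoprime_yz T.add_pow_eq hpx
  obtain ⟨⟨t, ht⟩, -⟩ :=
    exists_pow_eq_sub_of_not_dvd hp hpodd T.swap.isCoprime_yz T.swap.add_pow_eq hpy
  have hr' : (r : ZMod θ) ^ p = x + y := by rw [← Int.cast_pow, ← hr]; push_cast; ring
  have hs' : (s : ZMod θ) ^ p = -y := by rw [← Int.cast_pow, ← hs]; push_cast [hz]; ring
  have ht' : (t : ZMod θ) ^ p = -x := by rw [← Int.cast_pow, ← ht]; push_cast [hz]; ring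
  rcases hNC r s (-t) (by rw [hpodd.neg_pow, hr', hs', ht']; ring) with h | h | h
  · rwa [h, zero_pow hp.ne_zero, eq_comm] at hr'
  · simp [h, hp.ne_zero, hy] at hs'
  · simp [neg_eq_zero.mp h, hp.ne_zero, hx] at ht'

lemma cast_add_eq_zero_of_dvd_z (T : IsFermatTriple p x y z) (hp : p.Prime) (hpodd : Odd p)
    (hNpinv : ∀ u v w : ZMod θ, p * (u ^ p - v ^ p) = w ^ p → u = 0 ∨ v = 0 ∨ w = 0)
    (hp0 : (p : ZMod θ) ≠ 0)
    (hz : (z : ZMod θ) = 0) (hx : (x : ZMod θ) ≠ 0) (hy : (y : ZMod θ) ≠ 0)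
    (hpz : (p : ℤ) ∣ z) : (x : ZMod θ) + y = 0 := by
  have hpZ := Nat.prime_iff_prime_int.mp hp
  have R := T.rotate hpodd
  obtain ⟨w, hw, -⟩ :=
    exists_pow_eq_prime_mul_sub_of_dvd hp hpodd R.isCoprime_yz R.add_pow_eq hpz
  obtain ⟨⟨s, hs⟩, -⟩ := exists_pow_eq_sub_of_not_dvd hp hpodd T.isCoprime_yz T.add_pow_eq
    (hpZ.not_dvd_of_isCoprime T.isCoprime_xz hpz)
  obtain ⟨⟨t, ht⟩, -⟩ :=
    exists_pow_eq_sub_of_not_dvd hp hpodd T.swap.isCoprime_yz T.swap.add_pow_eq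
      (hpZ.not_dvd_of_isCoprime T.isCoprime_yz hpz)
  have hw' : (w : ZMod θ) ^ p = p * (x + y) := by rw [← Int.cast_pow, hw]; push_cast; ring
  have hs' : (s : ZMod θ) ^ p = -y := by rw [← Int.cast_pow, ← hs]; push_cast [hz]; ring
  have ht' : (t : ZMod θ) ^ p = -x := by rw [← Int.cast_pow, ← ht]; push_cast [hz]; ring
  rcases hNpinv (-s) t w (by rw [hpodd.neg_pow, hs', ht', hw']; ring) with h | h | h
  · simp [neg_eq_zero.mp h, hp.ne_zero, hy] at hs'
  · simp [h, hp.ne_zero, hx] at ht'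
  · rw [h, zero_pow hp.ne_zero, eq_comm, mul_eq_zero] at hw'
    exact hw'.resolve_left hp0

lemma cast_add_eq_zero_of_dvd_x (T : IsFermatTriple p x y z) (hp : p.Prime) (hpodd : Odd p)
    (hNpinv : ∀ u v w : ZMod θ, p * (u ^ p - v ^ p) = w ^ p → u = 0 ∨ v = 0 ∨ w = 0)
    (hp0 : (p : ZMod θ) ≠ 0)
    (hz : (z : ZMod θ) = 0) (hx : (x : ZMod θ) ≠ 0) (hy : (y : ZMod θ) ≠ 0)
    (hpx : (p : ℤ) ∣ x) : (x : ZMod θ) + y = 0 := by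
  have hpZ := Nat.prime_iff_prime_int.mp hp
  have R := T.rotate hpodd
  obtain ⟨⟨r, hr⟩, -⟩ := exists_pow_eq_sub_of_not_dvd hp hpodd R.isCoprime_yz R.add_pow_eq
    (hpZ.not_dvd_of_isCoprime T.isCoprime_xz.symm hpx)
  obtain ⟨w, hw, -⟩ :=
    exists_pow_eq_prime_mul_sub_of_dvd hp hpodd T.isCoprime_yz T.add_pow_eq hpx
  obtain ⟨⟨t, ht⟩, -⟩ :=
    exists_pow_eq_sub_of_not_dvd hp hpodd T.swap.isCoprime_yz T.swap.add_pow_eq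
      (hpZ.not_dvd_of_isCoprime T.isCoprime_xy.symm hpx)
  have hr' : (r : ZMod θ) ^ p = x + y := by rw [← Int.cast_pow, ← hr]; push_cast; ring
  have hw' : (w : ZMod θ) ^ p = -(p * y) := by rw [← Int.cast_pow, hw]; push_cast [hz]; ring
  have ht' : (t : ZMod θ) ^ p = -x := by rw [← Int.cast_pow, ← ht]; push_cast [hz]; ring
  rcases hNpinv r (-t) (-w) (by rw [hpodd.neg_pow, hpodd.neg_pow, hr', ht', hw']; ring)
    with h | h | h
  · rwa [h, zero_pow hp.ne_zero, eq_comm] at hr'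
  · simp [neg_eq_zero.mp h, hp.ne_zero, hx] at ht'
  · simp [neg_eq_zero.mp h, hp.ne_zero, hp0, hy] at hw'

lemma cast_add_eq_zero (T : IsFermatTriple p x y z) (hp : p.Prime) (hpodd : Odd p)
    (hNC : ∀ u v w : ZMod θ, u ^ p + v ^ p = w ^ p → u = 0 ∨ v = 0 ∨ w = 0)
    (hNpinv : ∀ u v w : ZMod θ, p * (u ^ p - v ^ p) = w ^ p → u = 0 ∨ v = 0 ∨ w = 0)
    (hp0 : (p : ZMod θ) ≠ 0)
    (hz : (z : ZMod θ) = 0) (hx : (x : ZMod θ) ≠ 0) (hy : (y : ZMod θ) ≠ 0) :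
    (x : ZMod θ) + y = 0 := by
  by_cases hpz : (p : ℤ) ∣ z
  · exact T.cast_add_eq_zero_of_dvd_z hp hpodd hNpinv hp0 hz hx hy hpz
  by_cases hpx : (p : ℤ) ∣ x
  · exact T.cast_add_eq_zero_of_dvd_x hp hpodd hNpinv hp0 hz hx hy hpx
  by_cases hpy : (p : ℤ) ∣ y
  · rw [add_comm]
    exact T.swap.cast_add_eq_zero_of_dvd_x hp hpodd hNpinv hp0 hz hy hx hpy
  exact T.cast_add_eq_zero_of_not_dvd hp hpodd hNC hz hx hy hpx hpy hpz

lemma prime_dvd_of_cast_add_eq_zero (T : IsFermatTriple p x y z) (hp : p.Prime)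
    (hpodd : Odd p) (hNp : ∀ c : ZMod θ, c ^ p ≠ p)
    (hz : (z : ZMod θ) = 0) (hx : (x : ZMod θ) ≠ 0) (hxy : (x : ZMod θ) + y = 0)
    (hpy : ¬ (p : ℤ) ∣ y) : (p : ℤ) ∣ z := by
  by_contra hpz
  have R := T.rotate hpodd
  obtain ⟨-, f, hf⟩ := exists_pow_eq_sub_of_not_dvd hp hpodd R.isCoprime_yz R.add_pow_eq hpz
  obtain ⟨-, g, hg⟩ :=
    exists_pow_eq_sub_of_not_dvd hp hpodd T.swap.isCoprime_yz T.swap.add_pow_eq hpy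
  have hf' : (f : ZMod θ) ^ p = p * x ^ (p - 1) := by
    rw [← Int.cast_pow, ← hf]
    push_cast
    exact geomSum₂_neg_of_add_eq_zero p hxy
  have hg' : (g : ZMod θ) ^ p = x ^ (p - 1) := by
    rw [← Int.cast_pow, ← hg]
    push_cast [hz]
    exact geomSum₂_zero_left p _ hp.ne_zero
  apply hNp (f / g)
  rw [div_pow, hf', hg', mul_div_assoc, div_self (pow_ne_zero _ hx), mul_one]

lemma pow_dvd_add_of_cast_add_eq_zero (T : IsFermatTriple p x y z) (hpodd : Odd p)
    (hp0 : (p : ZMod θ) ≠ 0) (hθz : (θ : ℤ) ∣ z) (hx : (x : ZMod θ) ≠ 0)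
    (hxy : (x : ZMod θ) + y = 0) : (θ : ℤ) ^ p ∣ x + y := by
  have he := sub_mul_geomSum₂_eq_pow (T.rotate hpodd).add_pow_eq
  rw [sub_neg_eq_add] at he
  have hG : ¬ (θ : ℤ) ∣ geomSum₂ p x (-y) := by
    rw [← ZMod.intCast_zmod_eq_zero_iff_dvd]
    push_cast
    rw [geomSum₂_neg_of_add_eq_zero p hxy]
    exact mul_ne_zero hp0 (pow_ne_zero _ hx)
  refine ((Nat.prime_iff_prime_int.mp Fact.out).coprime_iff_not_dvd.mpr hG).pow_left
    |>.dvd_of_dvd_mul_right ?_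
  rw [he]
  exact pow_dvd_pow_of_dvd hθz p

theorem large_dvd_add (T : IsFermatTriple p x y z) (hp : p.Prime) (hpodd : Odd p)
    (hNC : ∀ u v w : ZMod θ, u ^ p + v ^ p = w ^ p → u = 0 ∨ v = 0 ∨ w = 0)
    (hNp : ∀ c : ZMod θ, c ^ p ≠ p)
    (hNpinv : ∀ u v w : ZMod θ, p * (u ^ p - v ^ p) = w ^ p → u = 0 ∨ v = 0 ∨ w = 0)
    (hθz : (θ : ℤ) ∣ z) : (p : ℤ) ^ (2 * p - 1) * θ ^ p ∣ x + y := by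
  have hθ := Nat.prime_iff_prime_int.mp (Fact.out : θ.Prime)
  have hp0 : (p : ZMod θ) ≠ 0 := fun h => hNp 0 (by rw [h, zero_pow hp.ne_zero])
  have hz : (z : ZMod θ) = 0 := (ZMod.intCast_zmod_eq_zero_iff_dvd z θ).mpr hθz
  have hx : (x : ZMod θ) ≠ 0 := (ZMod.intCast_zmod_eq_zero_iff_dvd x θ).not.mpr
    (hθ.not_dvd_of_isCoprime T.isCoprime_xz hθz)
  have hy : (y : ZMod θ) ≠ 0 := (ZMod.intCast_zmod_eq_zero_iff_dvd y θ).not.mpr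
    (hθ.not_dvd_of_isCoprime T.isCoprime_yz hθz)
  have hxy := T.cast_add_eq_zero hp hpodd hNC hNpinv hp0 hz hx hy
  have hpz : (p : ℤ) ∣ z := by
    by_cases hpy : (p : ℤ) ∣ y
    · exact T.swap.prime_dvd_of_cast_add_eq_zero hp hpodd hNp hz hy (by rwa [add_comm])
        ((Nat.prime_iff_prime_int.mp hp).not_dvd_of_isCoprime T.isCoprime_xy hpy)
    · exact T.prime_dvd_of_cast_add_eq_zero hp hpodd hNp hz hx hxy hpy
  have hθp : IsCoprime (θ : ℤ) p := hθ.coprime_iff_not_dvd.mpr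
    ((ZMod.intCast_zmod_eq_zero_iff_dvd p θ).not.mp (by exact_mod_cast hp0))
  exact hθp.symm.pow.mul_dvd (T.prime_pow_dvd_add hp hpodd hpz)
    (T.pow_dvd_add_of_cast_add_eq_zero hpodd hp0 hθz hx hxy)

end Residues

end IsFermatTriple

/-! Conditions N-C, p-N-p and N-p⁻¹ restated in the field `ZMod θ`, N-C and N-p⁻¹ in
homogeneous form. -/

section Conditions

variable {p θ : ℕ} [Fact θ.Prime]

lemma add_pow_eq_pow_trivial_mod
    (hNC : ¬ ∃ a b : ℤ, ¬ (θ : ℤ) ∣ a ∧ ¬ (θ : ℤ) ∣ b ∧ b ^ p ≡ a ^ p + 1 [ZMOD (θ : ℤ)])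
    (u v w : ZMod θ) (h : u ^ p + v ^ p = w ^ p) : u = 0 ∨ v = 0 ∨ w = 0 := by
  by_contra! hne
  obtain ⟨hu, hv, hw⟩ := hne
  obtain ⟨a, ha⟩ := ZMod.intCast_surjective (u / v)
  obtain ⟨b, hb⟩ := ZMod.intCast_surjective (w / v)
  refine hNC ⟨a, b, ?_, ?_, ?_⟩
  · rw [← ZMod.intCast_zmod_eq_zero_iff_dvd, ha]
    exact div_ne_zero hu hv
  · rw [← ZMod.intCast_zmod_eq_zero_iff_dvd, hb]
    exact div_ne_zero hw hv
  · rw [← ZMod.intCast_eq_intCast_iff]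
    push_cast
    rw [ha, hb, div_pow, div_pow, ← h, add_div, div_self (pow_ne_zero p hv)]

lemma pow_ne_natCast_mod (hpNp : ¬ ∃ c : ℤ, c ^ p ≡ (p : ℤ) [ZMOD (θ : ℤ)]) (c : ZMod θ) :
    c ^ p ≠ p := by
  intro h
  obtain ⟨a, rfl⟩ := ZMod.intCast_surjective c
  exact hpNp ⟨a, by rw [← ZMod.intCast_eq_intCast_iff]; push_cast; exact h⟩

lemma mul_sub_pow_eq_pow_trivial_mod
    (hNpinv : ¬ ∃ a b : ℤ, ¬ (θ : ℤ) ∣ a ∧ ¬ (θ : ℤ) ∣ b ∧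
      (p : ℤ) * (a ^ p - b ^ p) ≡ 1 [ZMOD (θ : ℤ)])
    (u v w : ZMod θ) (h : p * (u ^ p - v ^ p) = w ^ p) : u = 0 ∨ v = 0 ∨ w = 0 := by
  by_contra! hne
  obtain ⟨hu, hv, hw⟩ := hne
  obtain ⟨a, ha⟩ := ZMod.intCast_surjective (u / w)
  obtain ⟨b, hb⟩ := ZMod.intCast_surjective (v / w)
  refine hNpinv ⟨a, b, ?_, ?_, ?_⟩
  · rw [← ZMod.intCast_zmod_eq_zero_iff_dvd, ha]
    exact div_ne_zero hu hw
  · rw [← ZMod.intCast_zmod_eq_zero_iff_dvd, hb]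
    exact div_ne_zero hv hw
  · rw [← ZMod.intCast_eq_intCast_iff]
    push_cast
    rw [ha, hb, div_pow, div_pow, ← sub_div, ← mul_div_assoc, h, div_self (pow_ne_zero p hw)]

end Conditions

theorem large_size_of_solutions_general
    (p θ : ℕ) (hp : p.Prime) (hpodd : Odd p) (hθ : θ.Prime)
    (x y z : ℤ)
    (hxy : IsCoprime x y) (hyz : IsCoprime y z) (hxz : IsCoprime x z)
    (hfermat : x ^ p + y ^ p = z ^ p)
    (hNC : ¬ ∃ a b : ℤ, ¬ (θ : ℤ) ∣ a ∧ ¬ (θ : ℤ) ∣ b ∧ b ^ p ≡ a ^ p + 1 [ZMOD (θ : ℤ)])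
    (hpNp : ¬ ∃ c : ℤ, c ^ p ≡ (p : ℤ) [ZMOD (θ : ℤ)])
    (hNpinv : ¬ ∃ a b : ℤ, ¬ (θ : ℤ) ∣ a ∧ ¬ (θ : ℤ) ∣ b ∧
      (p : ℤ) * (a ^ p - b ^ p) ≡ 1 [ZMOD (θ : ℤ)]) :
    (p : ℤ) ^ (2 * p - 1) * (θ : ℤ) ^ p ∣ x + y ∨
    (p : ℤ) ^ (2 * p - 1) * (θ : ℤ) ^ p ∣ z - y ∨
    (p : ℤ) ^ (2 * p - 1) * (θ : ℤ) ^ p ∣ z - x := by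
  have : Fact θ.Prime := ⟨hθ⟩
  have T : IsFermatTriple p x y z := ⟨hxy, hyz, hxz, hfermat⟩
  have hNC' := add_pow_eq_pow_trivial_mod hNC
  have hNp' := pow_ne_natCast_mod hpNp
  have hNpinv' := mul_sub_pow_eq_pow_trivial_mod hNpinv
  have hθxyz := hNC' x y z (by exact_mod_cast congrArg (Int.cast : ℤ → ZMod θ) hfermat)
  simp only [ZMod.intCast_zmod_eq_zero_iff_dvd] at hθxyz
  rcases hθxyz with hθx | hθy | hθz
  · right; left
    simpa [sub_eq_add_neg] using (T.rotate hpodd).large_dvd_add hp hpodd hNC' hNp' hNpinv' hθx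
  · right; right
    simpa [sub_eq_add_neg] using
      (T.swap.rotate hpodd).large_dvd_add hp hpodd hNC' hNp' hNpinv' hθy
  · left
    exact T.large_dvd_add hp hpodd hNC' hNp' hNpinv' hθz

/-- Germain's Large Size of Solutions theorem (corrected with the N-p⁻¹
condition from her erratum): if θ satisfies Conditions N-C, p-N-p, and
N-p⁻¹ for p, then one of x + y, z − y, z − x is divisible by
p^(2p−1)·θ^p. -/
theorem large_size_of_solutions
    (p θ : ℕ) (hp : p.Prime) (hpodd : Odd p) (hθ : θ.Prime)
    (x y z : ℤ) (hx : x ≠ 0) (hy : y ≠ 0) (hz : z ≠ 0)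
    (hxy : IsCoprime x y) (hyz : IsCoprime y z) (hxz : IsCoprime x z)
    (hfermat : x ^ p + y ^ p = z ^ p)
    (hNC : ¬ ∃ a b : ℤ, ¬ (θ : ℤ) ∣ a ∧ ¬ (θ : ℤ) ∣ b ∧ b ^ p ≡ a ^ p + 1 [ZMOD (θ : ℤ)])
    (hpNp : ¬ ∃ c : ℤ, c ^ p ≡ (p : ℤ) [ZMOD (θ : ℤ)])
    (hNpinv : ¬ ∃ a b : ℤ, ¬ (θ : ℤ) ∣ a ∧ ¬ (θ : ℤ) ∣ b ∧
      (p : ℤ) * (a ^ p - b ^ p) ≡ 1 [ZMOD (θ : ℤ)]) :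
    (p : ℤ) ^ (2 * p - 1) * (θ : ℤ) ^ p ∣ x + y ∨
    (p : ℤ) ^ (2 * p - 1) * (θ : ℤ) ^ p ∣ z - y ∨
    (p : ℤ) ^ (2 * p - 1) * (θ : ℤ) ^ p ∣ z - x :=
  large_size_of_solutions_general p θ hp hpodd hθ x y z hxy hyz hxz hfermat hNC hpNp hNpinv
end

section
/- Let p be an odd prime and x, y, z pairwise coprime nonzero integers with x^p + y^p = z^p and p dividing z. Then: (a) every prime divisor of (z^p − y^p)/(z − y) and every prime divisor of (z^p − x^p)/(z − x) is congruent to 1 modulo 2p (i.e., is of the form 2Np + 1); and (b) every prime divisor of (x^p + y^p)/(x + y) other than p is congruent to 1 modulo 2p^2 (i.e., is of the form 2Np^2 + 1). (Theorem 2 of Germain's Manuscript B.) -/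
/-!
If a prime `q` divides `(u^p - v^p)/(u - v)` but neither `u` nor `p`, then `q ∤ u - v`, so `v/u` has
order `p` in `ZMod q` and `p ∣ q - 1`; as `p` and `q` are odd, `q ≡ 1 [MOD 2p]`.

(a) A prime dividing `(z^p - y^p)/(z - y)` divides `x`, hence not `y` and not `p` (as `p ∣ z`).

(b) A prime `q ≠ p` dividing `(x^p + y^p)/(x + y)` divides `z`. Since `p ∣ z`, the factors of
`z^p - y^p = x^p` are coprime, so `z - y = a^p`, and likewise `z - x = b^p` (Barlow's relations).
Modulo `q` this reads `-y = a^p`, `-x = b^p`, so the element `x/(-y)` of order `p` is the `p`-th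
power of `-b/a`, which therefore has order `p²`.
-/

open Finset

theorem sum_neg_one_pow_mul_pow_mul_pow {R : Type*} [CommRing R] (n : ℕ) (u v : R) :
    ∑ i ∈ range n, (-1) ^ i * u ^ (n - 1 - i) * v ^ i =
      ∑ i ∈ range n, (-v) ^ i * u ^ (n - 1 - i) :=
  sum_congr rfl fun i _ => by rw [neg_pow]; ring

theorem isCoprime_sub_geom_sum₂ {p : ℕ} (hp : p.Prime) {y z : ℤ} (hyz : IsCoprime y z)
    (hpz : (p : ℤ) ∣ z) : IsCoprime (z - y) (∑ i ∈ range p, z ^ i * y ^ (p - 1 - i)) := by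
  have hdvd_mul : ∀ r, r ∣ z - y → r ∣ ∑ i ∈ range p, z ^ i * y ^ (p - 1 - i) →
      r ∣ p * y ^ (p - 1) :=
    fun r h => (dvd_geom_sum₂_iff_of_dvd_sub h).mp
  refine isCoprime_of_prime_dvd ?_ fun r hr hsub hsum => ?_
  · rintro ⟨hsub, hsum⟩
    have hy : y = 0 := eq_zero_of_pow_eq_zero <| (mul_eq_zero.mp <| zero_dvd_iff.mp <|
      hdvd_mul 0 (by rw [hsub]) (by rw [hsum])).resolve_left (by exact_mod_cast hp.ne_zero)
    have hz : z = 0 := by linarith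
    exact not_isCoprime_zero_zero (hy ▸ hz ▸ hyz)
  · have hry : r ∣ y := by
      rcases hr.dvd_or_dvd (hdvd_mul r hsub hsum) with h | h
      · simpa using dvd_sub (h.trans hpz) hsub
      · exact hr.dvd_of_dvd_pow h
    exact hr.not_isUnit (hyz.isUnit_of_dvd' hry (by simpa using dvd_add hsub hry))

theorem exists_sub_eq_pow_of_add_pow_eq_pow {p : ℕ} (hp : p.Prime) (hpodd : Odd p) {x y z : ℤ}
    (hyz : IsCoprime y z) (hpz : (p : ℤ) ∣ z) (h : x ^ p + y ^ p = z ^ p) :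
    ∃ a, z - y = a ^ p :=
  Int.eq_pow_of_mul_eq_pow_odd_left (c := x) (isCoprime_sub_geom_sum₂ hp hyz hpz) hpodd
    (by rw [mul_comm, geom_sum₂_mul]; linear_combination -h)

theorem orderOf_div_eq_prime {K : Type*} [Field K] {p : ℕ} [Fact p.Prime] {u v : K}
    (hu : u ≠ 0) (hpow : u ^ p = v ^ p) (hne : u ≠ v) : orderOf (v / u) = p :=
  orderOf_eq_prime (by rw [div_pow, ← hpow, div_self (pow_ne_zero p hu)])
    (by rwa [Ne, div_eq_one_iff_eq hu, eq_comm])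

theorem orderOf_intCast_div_eq_of_dvd_geom_sum₂ {p q : ℕ} [Fact p.Prime] [Fact q.Prime]
    {u v : ℤ} (hu : ¬(q : ℤ) ∣ u) (hqp : q ≠ p)
    (hdvd : (q : ℤ) ∣ ∑ i ∈ range p, u ^ i * v ^ (p - 1 - i)) :
    orderOf ((v : ZMod q) / u) = p := by
  have hq : Prime (q : ℤ) := Nat.prime_iff_prime_int.mp Fact.out
  have hqp' : ¬(q : ℤ) ∣ p := by
    rwa [Int.natCast_dvd_natCast, Nat.prime_dvd_prime_iff_eq Fact.out Fact.out]
  have hsub : ¬(q : ℤ) ∣ u - v := fun h => not_dvd_geom_sum₂ hq h hu hqp' hdvd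
  have hpow : (q : ℤ) ∣ u ^ p - v ^ p := geom_sum₂_mul u v p ▸ dvd_mul_of_dvd_left hdvd _
  simp only [← ZMod.intCast_zmod_eq_zero_iff_dvd, Int.cast_sub, Int.cast_pow, sub_eq_zero]
    at hu hsub hpow
  exact orderOf_div_eq_prime hu hpow hsub

theorem orderOf_eq_sq_of_pow_eq {G : Type*} [Monoid G] {p : ℕ} [Fact p.Prime] {w t : G}
    (ht : orderOf t = p) (hw : w ^ p = t) : orderOf w = p ^ 2 :=
  orderOf_eq_prime_pow (n := 1)
    (by rw [pow_one, hw]; rintro rfl; exact (Fact.out : p.Prime).ne_one (ht ▸ orderOf_one))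
    (by rw [pow_succ, pow_one, pow_mul, hw, ← ht, pow_orderOf_eq_one])

theorem ZMod.dvd_card_sub_one_of_orderOf_eq {q n : ℕ} [Fact q.Prime] {w : ZMod q}
    (hw : orderOf w = n) (hn : n ≠ 0) : n ∣ q - 1 :=
  hw ▸ ZMod.orderOf_dvd_card_sub_one fun h => hn (hw ▸ orderOf_eq_zero_iff_eq_zero.mpr h)

theorem Nat.Prime.modEq_one_two_mul_of_dvd_sub_one {q n : ℕ} (hq : q.Prime) (hn : Odd n)
    (hn1 : n ≠ 1) (h : n ∣ q - 1) : q ≡ 1 [MOD 2 * n] := by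
  have hq2 : q ≠ 2 := by rintro rfl; exact hn1 (Nat.dvd_one.mp h)
  have h2 : 2 ∣ q - 1 := (Nat.Odd.sub_odd (hq.odd_of_ne_two hq2) odd_one).two_dvd
  exact ((Nat.modEq_iff_dvd' hq.one_le).mpr
    ((Nat.coprime_two_left.mpr hn).mul_dvd_of_dvd_of_dvd h2 h)).symm

theorem modEq_one_of_dvd_geom_sum₂_of_add_pow_eq_pow {p q : ℕ} (hp : p.Prime) (hpodd : Odd p)
    (hq : q.Prime) {x y z : ℤ} (hxy : IsCoprime x y) (hxz : IsCoprime x z) (hpz : (p : ℤ) ∣ z)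
    (hfermat : x ^ p + y ^ p = z ^ p)
    (hdvd : (q : ℤ) ∣ ∑ i ∈ range p, y ^ i * z ^ (p - 1 - i)) : q ≡ 1 [MOD 2 * p] := by
  have := Fact.mk hp
  have := Fact.mk hq
  have hq' : Prime (q : ℤ) := Nat.prime_iff_prime_int.mp hq
  have hqx : (q : ℤ) ∣ x := hq'.dvd_of_dvd_pow (n := p) <| by
    have h := dvd_mul_of_dvd_left hdvd (y - z)
    rwa [geom_sum₂_mul, show y ^ p - z ^ p = -x ^ p by linear_combination hfermat, dvd_neg] at h
  have hqy : ¬(q : ℤ) ∣ y := fun h => hq'.not_isUnit (hxy.isUnit_of_dvd' hqx h)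
  have hqp : q ≠ p := by rintro rfl; exact hq'.not_isUnit (hxz.isUnit_of_dvd' hqx hpz)
  exact hq.modEq_one_two_mul_of_dvd_sub_one hpodd hp.ne_one
    (ZMod.dvd_card_sub_one_of_orderOf_eq
      (orderOf_intCast_div_eq_of_dvd_geom_sum₂ hqy hqp hdvd) hp.ne_zero)

theorem modEq_one_of_dvd_geom_sum₂_neg_of_add_pow_eq_pow {p q : ℕ} (hp : p.Prime)
    (hpodd : Odd p) (hq : q.Prime) (hqp : q ≠ p) {x y z : ℤ} (hyz : IsCoprime y z)
    (hxz : IsCoprime x z) (hpz : (p : ℤ) ∣ z) (hfermat : x ^ p + y ^ p = z ^ p)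
    (hdvd : (q : ℤ) ∣ ∑ i ∈ range p, (-y) ^ i * x ^ (p - 1 - i)) : q ≡ 1 [MOD 2 * p ^ 2] := by
  have := Fact.mk hp
  have := Fact.mk hq
  have hq' : Prime (q : ℤ) := Nat.prime_iff_prime_int.mp hq
  have hqz : (q : ℤ) ∣ z := hq'.dvd_of_dvd_pow (n := p) <| by
    have h := dvd_mul_of_dvd_left hdvd (-y - x)
    rwa [geom_sum₂_mul, hpodd.neg_pow, show -y ^ p - x ^ p = -z ^ p by linear_combination -hfermat,
      dvd_neg] at h
  have hqy : ¬(q : ℤ) ∣ -y := by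
    rw [dvd_neg]; exact fun h => hq'.not_isUnit (hyz.isUnit_of_dvd' h hqz)
  have hord := orderOf_intCast_div_eq_of_dvd_geom_sum₂ hqy hqp hdvd
  obtain ⟨a, ha⟩ := exists_sub_eq_pow_of_add_pow_eq_pow hp hpodd hyz hpz hfermat
  obtain ⟨b, hb⟩ := exists_sub_eq_pow_of_add_pow_eq_pow hp hpodd hxz hpz
    ((add_comm _ _).trans hfermat)
  have hroot : (-(b : ZMod q) / a) ^ p = (x : ZMod q) / (-y : ℤ) := by
    have hz : (z : ZMod q) = 0 := (ZMod.intCast_zmod_eq_zero_iff_dvd z q).mpr hqz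
    have ha' := congrArg (Int.cast : ℤ → ZMod q) ha
    have hb' := congrArg (Int.cast : ℤ → ZMod q) hb
    push_cast [hz] at ha' hb' ⊢
    rw [div_pow, hpodd.neg_pow, ← ha', ← hb']
    ring
  exact hq.modEq_one_two_mul_of_dvd_sub_one hpodd.pow (Nat.one_lt_pow two_ne_zero hp.one_lt).ne'
    (ZMod.dvd_card_sub_one_of_orderOf_eq (orderOf_eq_sq_of_pow_eq hord hroot)
      (pow_ne_zero 2 hp.ne_zero))

theorem manuscript_B_theorem_2_general
    (p : ℕ) (hp : p.Prime) (hpodd : Odd p)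
    (x y z : ℤ)
    (hxy : IsCoprime x y) (hyz : IsCoprime y z) (hxz : IsCoprime x z)
    (hfermat : x ^ p + y ^ p = z ^ p) (hpz : (p : ℤ) ∣ z) :
    (∀ q : ℕ, q.Prime →
      ((q : ℤ) ∣ ∑ i ∈ Finset.range p, (-1) ^ i * z ^ (p - 1 - i) * (-y) ^ i →
        q ≡ 1 [MOD 2 * p]) ∧
      ((q : ℤ) ∣ ∑ i ∈ Finset.range p, (-1) ^ i * z ^ (p - 1 - i) * (-x) ^ i →
        q ≡ 1 [MOD 2 * p])) ∧
    (∀ q : ℕ, q.Prime → q ≠ p →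
      (q : ℤ) ∣ ∑ i ∈ Finset.range p, (-1) ^ i * x ^ (p - 1 - i) * y ^ i →
        q ≡ 1 [MOD 2 * p ^ 2]) := by
  simp only [sum_neg_one_pow_mul_pow_mul_pow, neg_neg]
  refine ⟨fun q hq => ⟨fun hdvd => ?_, fun hdvd => ?_⟩, fun q hq hqp hdvd => ?_⟩
  · exact modEq_one_of_dvd_geom_sum₂_of_add_pow_eq_pow hp hpodd hq hxy hxz hpz hfermat hdvd
  · exact modEq_one_of_dvd_geom_sum₂_of_add_pow_eq_pow hp hpodd hq hxy.symm hyz hpz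
      ((add_comm _ _).trans hfermat) hdvd
  · exact modEq_one_of_dvd_geom_sum₂_neg_of_add_pow_eq_pow hp hpodd hq hqp hyz hxz hpz hfermat
      hdvd

/-- Theorem 2 of Germain's Manuscript B: if x, y, z are pairwise coprime
nonzero integers with x^p + y^p = z^p and p ∣ z, then (a) every prime divisor
of the cofactors φ(z, −y) and φ(z, −x) is ≡ 1 (mod 2p), and (b) every prime
divisor of the cofactor φ(x, y) other than p is ≡ 1 (mod 2p²). -/
theorem manuscript_B_theorem_2
    (p : ℕ) (hp : p.Prime) (hpodd : Odd p)
    (x y z : ℤ) (hx : x ≠ 0) (hy : y ≠ 0) (hz : z ≠ 0)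
    (hxy : IsCoprime x y) (hyz : IsCoprime y z) (hxz : IsCoprime x z)
    (hfermat : x ^ p + y ^ p = z ^ p) (hpz : (p : ℤ) ∣ z) :
    (∀ q : ℕ, q.Prime →
      ((q : ℤ) ∣ ∑ i ∈ Finset.range p, (-1) ^ i * z ^ (p - 1 - i) * (-y) ^ i →
        q ≡ 1 [MOD 2 * p]) ∧
      ((q : ℤ) ∣ ∑ i ∈ Finset.range p, (-1) ^ i * z ^ (p - 1 - i) * (-x) ^ i →
        q ≡ 1 [MOD 2 * p])) ∧
    (∀ q : ℕ, q.Prime → q ≠ p →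
      (q : ℤ) ∣ ∑ i ∈ Finset.range p, (-1) ^ i * x ^ (p - 1 - i) * y ^ i →
        q ≡ 1 [MOD 2 * p ^ 2]) :=
  manuscript_B_theorem_2_general p hp hpodd x y z hxy hyz hxz hfermat hpz
end
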